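/- arXiv:0808.3330 — 12 statements merged into one kernel-verified Lean document; each statement's English description precedes it below -/
import Mathlib

section
/- Let (A,·) and (B,∘) be (nonunital) associative algebras over a field F, and suppose (A,B,l_A,r_A,l_B,r_B) is a matched pair of associative algebras. Then the product on the direct sum vector space A ⊕ B defined by (x+a)*(y+b) = (x·y + l_B(a)y + r_B(b)x) + (a∘b + l_A(x)b + r_A(y)a) for x,y ∈ A and a,b ∈ B is associative, so A ⊕ B becomes an associative algebra containing A and B as subalgebras. -/
open TensorProduct LinearMap

section Prelude
variable {F : Type*} [Field F]

/-- Associativity of a (nonunital) bilinear product. -/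
def IsAssocMul {A : Type*} [AddCommGroup A] [Module F A]
    (m : A →ₗ[F] A →ₗ[F] A) : Prop :=
  ∀ x y z, m (m x y) z = m x (m y z)

/-- `(l, r, V)` is a bimodule of the associative algebra `(A, m)`. -/
def IsBimodule {A V : Type*} [AddCommGroup A] [Module F A]
    [AddCommGroup V] [Module F V]
    (m : A →ₗ[F] A →ₗ[F] A) (l r : A →ₗ[F] V →ₗ[F] V) : Prop :=
  (∀ x y v, l (m x y) v = l x (l y v)) ∧
  (∀ x y v, r (m x y) v = r y (r x v)) ∧
  (∀ x y v, l x (r y v) = r y (l x v))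

/-- `(A, B, lA, rA, lB, rB)` is a matched pair of associative algebras. -/
def IsMatchedPair {A B : Type*} [AddCommGroup A] [Module F A]
    [AddCommGroup B] [Module F B]
    (mA : A →ₗ[F] A →ₗ[F] A) (mB : B →ₗ[F] B →ₗ[F] B)
    (lA rA : A →ₗ[F] B →ₗ[F] B) (lB rB : B →ₗ[F] A →ₗ[F] A) : Prop :=
  IsAssocMul mA ∧ IsAssocMul mB ∧ IsBimodule mA lA rA ∧ IsBimodule mB lB rB ∧
  (∀ x a b, lA x (mB a b) = lA (rB a x) b + mB (lA x a) b) ∧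
  (∀ x a b, rA x (mB a b) = rA (lB b x) a + mB a (rA x b)) ∧
  (∀ a x y, lB a (mA x y) = lB (rA x a) y + mA (lB a x) y) ∧
  (∀ a x y, rB a (mA x y) = rB (lA y a) x + mA x (rB a y)) ∧
  (∀ x a b, lA (lB a x) b + mB (rA x a) b - rA (rB b x) a - mB a (lA x b) = 0) ∧
  (∀ a x y, lB (lA x a) y + mA (rB a x) y - rB (rA y a) x - mA x (lB a y) = 0)

/-- Dendriform algebra axioms for a pair of bilinear products `≻ = s`, `≺ = p`. -/
def IsDendriform {A : Type*} [AddCommGroup A] [Module F A]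
    (s p : A →ₗ[F] A →ₗ[F] A) : Prop :=
  (∀ x y z, p (p x y) z = p x (s y z + p y z)) ∧
  (∀ x y z, p (s x y) z = s x (p y z)) ∧
  (∀ x y z, s x (s y z) = s (s x y + p x y) z)

/-- The pairing of `f ⊗ g ∈ A* ⊗ A*` with elements of `A ⊗ A`. -/
noncomputable def pair2 {A : Type*} [AddCommGroup A] [Module F A]
    (f g : Module.Dual F A) : (A ⊗[F] A) →ₗ[F] F :=
  (TensorProduct.lid F F).toLinearMap ∘ₗ TensorProduct.map f g

/-- `t12 m (r ⊗ s)` is `r₁₂ ∙ s₁₃`: on `(x ⊗ y) ⊗ (x' ⊗ y')` it gives `m x x' ⊗ y ⊗ y'`. -/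
noncomputable def t12 {A : Type*} [AddCommGroup A] [Module F A]
    (m : A →ₗ[F] A →ₗ[F] A) :
    ((A ⊗[F] A) ⊗[F] (A ⊗[F] A)) →ₗ[F] A ⊗[F] (A ⊗[F] A) :=
  TensorProduct.map (TensorProduct.lift m) LinearMap.id ∘ₗ
    (TensorProduct.tensorTensorTensorComm F A A A A).toLinearMap

/-- `t13 m (r ⊗ s)` is `r₁₃ ∙ s₂₃`: on `(x ⊗ y) ⊗ (x' ⊗ y')` it gives `x ⊗ x' ⊗ m y y'`. -/
noncomputable def t13 {A : Type*} [AddCommGroup A] [Module F A]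
    (m : A →ₗ[F] A →ₗ[F] A) :
    ((A ⊗[F] A) ⊗[F] (A ⊗[F] A)) →ₗ[F] A ⊗[F] (A ⊗[F] A) :=
  (TensorProduct.assoc F A A A).toLinearMap ∘ₗ
    TensorProduct.map LinearMap.id (TensorProduct.lift m) ∘ₗ
    (TensorProduct.tensorTensorTensorComm F A A A A).toLinearMap

/-- `t23 m (r ⊗ s)` is `r₂₃ ∙ s₁₂`: on `(x ⊗ y) ⊗ (x' ⊗ y')` it gives `x' ⊗ m x y' ⊗ y`. -/
noncomputable def t23 {A : Type*} [AddCommGroup A] [Module F A]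
    (m : A →ₗ[F] A →ₗ[F] A) :
    ((A ⊗[F] A) ⊗[F] (A ⊗[F] A)) →ₗ[F] A ⊗[F] (A ⊗[F] A) :=
  (TensorProduct.leftComm F A A A).toLinearMap ∘ₗ
    TensorProduct.map LinearMap.id (TensorProduct.comm F A A).toLinearMap ∘ₗ
    TensorProduct.map (TensorProduct.lift m) LinearMap.id ∘ₗ
    (TensorProduct.tensorTensorTensorComm F A A A A).toLinearMap ∘ₗ
    TensorProduct.map LinearMap.id (TensorProduct.comm F A A).toLinearMap

/-- `aybE m r = r₁₂r₁₃ + r₁₃r₂₃ − r₂₃r₁₂`, the associative Yang–Baxter expression. -/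
noncomputable def aybE {A : Type*} [AddCommGroup A] [Module F A]
    (m : A →ₗ[F] A →ₗ[F] A) (r : A ⊗[F] A) : A ⊗[F] (A ⊗[F] A) :=
  t12 m (r ⊗ₜ r) + t13 m (r ⊗ₜ r) - t23 m (r ⊗ₜ r)

end Prelude

/-- a matched pair of associative algebras yields an associative
product on the direct sum `A ⊕ B`, containing `A` and `B` as subalgebras. -/
theorem matchedPair_direct_sum_assoc
    {F A B : Type*} [Field F] [AddCommGroup A] [Module F A]
    [AddCommGroup B] [Module F B]
    (mA : A →ₗ[F] A →ₗ[F] A) (mB : B →ₗ[F] B →ₗ[F] B)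
    (lA rA : A →ₗ[F] B →ₗ[F] B) (lB rB : B →ₗ[F] A →ₗ[F] A)
    (h : IsMatchedPair mA mB lA rA lB rB)
    (M : (A × B) →ₗ[F] (A × B) →ₗ[F] (A × B))
    (hM : ∀ u v : A × B, M u v =
      (mA u.1 v.1 + lB u.2 v.1 + rB v.2 u.1,
       mB u.2 v.2 + lA u.1 v.2 + rA v.1 u.2)) :
    IsAssocMul M ∧
    (∀ x y : A, M (x, 0) (y, 0) = (mA x y, 0)) ∧
    (∀ a b : B, M (0, a) (0, b) = (0, mB a b)) := by
  obtain ⟨hA, hB, ⟨hlA, hrA, hcA⟩, ⟨hlB, hrB, hcB⟩, h5, h6, h7, h8, h9, h10⟩ := h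
  refine ⟨?_, ?_, ?_⟩
  · intro u v w
    obtain ⟨x, a⟩ := u; obtain ⟨y, b⟩ := v; obtain ⟨z, c⟩ := w
    have H9 : mB (rA y a) c = rA (rB c y) a + mB a (lA y c) - lA (lB a y) c := by
      have := h9 y a c
      rw [sub_sub, sub_eq_zero] at this
      rw [← this]; abel
    have H10 : mA (rB b x) z = rB (rA z b) x + mA x (lB b z) - lB (lA x b) z := by
      have := h10 b x z
      rw [sub_sub, sub_eq_zero] at this
      rw [← this]; abel
    have e1 := hM (x, a) (y, b)
    have e2 := hM (y, b) (z, c)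
    ext
    · simp only [hM, e1, e2, map_add, LinearMap.add_apply]
      rw [hA x y z, hlB a b z, hrB b c x, h7 a y z, h8 c x y, hcB a c y, H10]
      abel
    · simp only [hM, e1, e2, map_add, LinearMap.add_apply]
      rw [hB a b c, hlA x y c, hrA y z a, h5 x b c, h6 z a b, hcA x z b, H9]
      abel
  · intro x y; simp [hM]
  · intro a b; simp [hM]
end

section
/- Let (A,·) be a finite-dimensional (nonunital) associative algebra over a field F and let ∘ be an associative product on the dual space A*. Then there exists an associative product * on the direct sum vector space A ⊕ A* restricting to · on A and to ∘ on A* such that the natural symmetric bilinear form B(x+a*, y+b*) = ⟨x,b*⟩ + ⟨a*,y⟩ is invariant (i.e. B(u*v, w) = B(u, v*w) for all u,v,w ∈ A ⊕ A*) if and only if (A, A*, R·*, L·*, R∘*, L∘*) is a matched pair of associative algebras; in that case * is given by (x+a*)*(y+b*) = (x·y + R∘*(a*)y + L∘*(b*)x) + (a*∘b* + R·*(x)b* + L·*(y)a*). -/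
/-! Invariance of `B` pins down the mixed products: pairing `(x, 0) * (0, b*)` with `(0, c*)`
and with `(y, 0)` gives `(L∘*(b*) x, R·*(x) b*)`, and symmetrically for `(0, a*) * (y, 0)`, so
`*` is forced to be the displayed product, which conversely is always invariant. It remains to
see when that product is associative: evaluating associativity on the triples of elements of
`A` or `A*` and projecting to `A` and to `A*` yields exactly the associativity of `·` and `∘`,
the six bimodule identities and the six compatibility identities of a matched pair, and these
fourteen identities add up to associativity on arbitrary triples. -/

open TensorProduct LinearMap

/-- An associative product `M` on `A ⊕ A*` restricting to `mA` on `A` and to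
`circ` on `A*`, for which the natural symmetric bilinear form
`B(x+a*, y+b*) = ⟨x,b*⟩ + ⟨a*,y⟩` is invariant. -/
def IsFrobeniusDoubleProduct {F A : Type*} [Field F] [AddCommGroup A] [Module F A]
    (mA : A →ₗ[F] A →ₗ[F] A)
    (circ : Module.Dual F A →ₗ[F] Module.Dual F A →ₗ[F] Module.Dual F A)
    (M : (A × Module.Dual F A) →ₗ[F] (A × Module.Dual F A) →ₗ[F]
      (A × Module.Dual F A)) : Prop :=
  IsAssocMul M ∧
  (∀ x y : A, M (x, 0) (y, 0) = (mA x y, 0)) ∧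
  (∀ a b : Module.Dual F A, M (0, a) (0, b) = (0, circ a b)) ∧
  (∀ u v w : A × Module.Dual F A,
    w.2 (M u v).1 + (M u v).2 w.1 = (M v w).2 u.1 + u.2 (M v w).1)

section DoubleProduct

variable {F A B : Type*} [Field F] [AddCommGroup A] [Module F A] [AddCommGroup B] [Module F B]

def doubleMul (mA : A →ₗ[F] A →ₗ[F] A) (mB : B →ₗ[F] B →ₗ[F] B)
    (lA rA : A →ₗ[F] B →ₗ[F] B) (lB rB : B →ₗ[F] A →ₗ[F] A) :
    (A × B) →ₗ[F] (A × B) →ₗ[F] (A × B) :=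
  LinearMap.mk₂ F
    (fun u v => (mA u.1 v.1 + lB u.2 v.1 + rB v.2 u.1, mB u.2 v.2 + lA u.1 v.2 + rA v.1 u.2))
    (fun _ _ _ => by
      ext <;> simp only [Prod.fst_add, Prod.snd_add, map_add, LinearMap.add_apply] <;> abel)
    (fun _ _ _ => by
      ext <;> simp only [Prod.smul_fst, Prod.smul_snd, map_smul, LinearMap.smul_apply, smul_add])
    (fun _ _ _ => by
      ext <;> simp only [Prod.fst_add, Prod.snd_add, map_add, LinearMap.add_apply] <;> abel)
    (fun _ _ _ => by
      ext <;> simp only [Prod.smul_fst, Prod.smul_snd, map_smul, LinearMap.smul_apply, smul_add])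

variable {mA : A →ₗ[F] A →ₗ[F] A} {mB : B →ₗ[F] B →ₗ[F] B}
  {lA rA : A →ₗ[F] B →ₗ[F] B} {lB rB : B →ₗ[F] A →ₗ[F] A}

@[simp]
theorem doubleMul_apply (u v : A × B) :
    doubleMul mA mB lA rA lB rB u v =
      (mA u.1 v.1 + lB u.2 v.1 + rB v.2 u.1, mB u.2 v.2 + lA u.1 v.2 + rA v.1 u.2) :=
  rfl

theorem IsMatchedPair.isAssocMul_doubleMul (h : IsMatchedPair mA mB lA rA lB rB) :
    IsAssocMul (doubleMul mA mB lA rA lB rB) := by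
  obtain ⟨hA, hB, ⟨hlA, hrA, hlrA⟩, ⟨hlB, hrB, hlrB⟩, h₁, h₂, h₃, h₄, h₅, h₆⟩ := h
  rintro ⟨x, a⟩ ⟨y, b⟩ ⟨z, c⟩
  simp only [doubleMul_apply, map_add, LinearMap.add_apply, Prod.mk.injEq]
  constructor
  · linear_combination (norm := abel)
      hA x y z - h₃ a y z + h₆ b x z + h₄ c x y + hlB a b z - hlrB a c y - hrB b c x
  · linear_combination (norm := abel)
      hB a b c - h₁ x b c + h₅ y a c + h₂ z a b + hlA x y c - hlrA x z b - hrA y z a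

theorem IsAssocMul.isMatchedPair_of_doubleMul (h : IsAssocMul (doubleMul mA mB lA rA lB rB)) :
    IsMatchedPair mA mB lA rA lB rB := by
  have assoc := fun u v w => Prod.ext_iff.mp (h u v w)
  refine ⟨fun x y z => ?_, fun a b c => ?_, ⟨fun x y a => ?_, fun x y a => ?_, fun x y a => ?_⟩,
    ⟨fun a b x => ?_, fun a b x => ?_, fun a b x => ?_⟩,
    fun x a b => ?_, fun x a b => ?_, fun a x y => ?_, fun a x y => ?_, fun x a b => ?_,
    fun a x y => ?_⟩
  · simpa using (assoc (x, 0) (y, 0) (z, 0)).1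
  · simpa using (assoc (0, a) (0, b) (0, c)).2
  · simpa using (assoc (x, 0) (y, 0) (0, a)).2
  · simpa using (assoc (0, a) (x, 0) (y, 0)).2.symm
  · simpa using (assoc (x, 0) (0, a) (y, 0)).2.symm
  · simpa using (assoc (0, a) (0, b) (x, 0)).1
  · simpa using (assoc (x, 0) (0, a) (0, b)).1.symm
  · simpa using (assoc (0, a) (x, 0) (0, b)).1.symm
  · simpa [add_comm] using (assoc (x, 0) (0, a) (0, b)).2.symm
  · simpa [add_comm] using (assoc (0, a) (0, b) (x, 0)).2
  · simpa [add_comm] using (assoc (0, a) (x, 0) (y, 0)).1.symm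
  · simpa [add_comm] using (assoc (x, 0) (y, 0) (0, a)).1
  · rw [sub_sub, sub_eq_zero]
    simpa [add_comm] using (assoc (0, a) (x, 0) (0, b)).2
  · rw [sub_sub, sub_eq_zero]
    simpa [add_comm] using (assoc (x, 0) (0, a) (y, 0)).1

theorem isAssocMul_doubleMul_iff :
    IsAssocMul (doubleMul mA mB lA rA lB rB) ↔ IsMatchedPair mA mB lA rA lB rB :=
  ⟨IsAssocMul.isMatchedPair_of_doubleMul, IsMatchedPair.isAssocMul_doubleMul⟩

end DoubleProduct

section FrobeniusDouble

variable {F A : Type*} [Field F] [AddCommGroup A] [Module F A]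
  {mA : A →ₗ[F] A →ₗ[F] A}
  {circ : Module.Dual F A →ₗ[F] Module.Dual F A →ₗ[F] Module.Dual F A}
  {Rd Ld : A →ₗ[F] Module.Dual F A →ₗ[F] Module.Dual F A}
  {Ro Lo : Module.Dual F A →ₗ[F] A →ₗ[F] A}

theorem isFrobeniusDoubleProduct_doubleMul_iff
    (hRd : ∀ (x y : A) (a : Module.Dual F A), Rd x a y = a (mA y x))
    (hLd : ∀ (x y : A) (a : Module.Dual F A), Ld x a y = a (mA x y))
    (hRo : ∀ (a b : Module.Dual F A) (x : A), b (Ro a x) = circ b a x)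
    (hLo : ∀ (a b : Module.Dual F A) (x : A), b (Lo a x) = circ a b x) :
    IsFrobeniusDoubleProduct mA circ (doubleMul mA circ Rd Ld Ro Lo) ↔
      IsAssocMul (doubleMul mA circ Rd Ld Ro Lo) := by
  refine ⟨fun h => h.1, fun h => ⟨h, fun x y => by simp, fun a b => by simp, ?_⟩⟩
  rintro ⟨x, a⟩ ⟨y, b⟩ ⟨z, c⟩
  simp only [doubleMul_apply, map_add, LinearMap.add_apply, hRd, hLd, hRo, hLo]
  ring

theorem IsFrobeniusDoubleProduct.mul_inl_inr
    {M : (A × Module.Dual F A) →ₗ[F] (A × Module.Dual F A) →ₗ[F] (A × Module.Dual F A)}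
    (hM : IsFrobeniusDoubleProduct mA circ M)
    (hRd : ∀ (x y : A) (a : Module.Dual F A), Rd x a y = a (mA y x))
    (hLo : ∀ (a b : Module.Dual F A) (x : A), b (Lo a x) = circ a b x)
    (x : A) (b : Module.Dual F A) : M (x, 0) (0, b) = (Lo b x, Rd x b) := by
  obtain ⟨-, hAA, hDD, hInv⟩ := hM
  ext
  · refine Module.eval_apply_injective F (LinearMap.ext fun c => ?_)
    simpa [hDD, hLo] using hInv (x, 0) (0, b) (0, c)
  · simpa [hAA, hRd] using (hInv (_, 0) (x, 0) (0, b)).symm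

theorem IsFrobeniusDoubleProduct.mul_inr_inl
    {M : (A × Module.Dual F A) →ₗ[F] (A × Module.Dual F A) →ₗ[F] (A × Module.Dual F A)}
    (hM : IsFrobeniusDoubleProduct mA circ M)
    (hLd : ∀ (x y : A) (a : Module.Dual F A), Ld x a y = a (mA x y))
    (hRo : ∀ (a b : Module.Dual F A) (x : A), b (Ro a x) = circ b a x)
    (a : Module.Dual F A) (y : A) : M (0, a) (y, 0) = (Ro a y, Ld y a) := by
  obtain ⟨-, hAA, hDD, hInv⟩ := hM
  ext
  · refine Module.eval_apply_injective F (LinearMap.ext fun c => ?_)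
    simpa [hDD, hRo] using (hInv (0, c) (0, a) (y, 0)).symm
  · simpa [hAA, hLd] using hInv (0, a) (y, 0) (_, 0)

theorem IsFrobeniusDoubleProduct.eq_doubleMul
    {M : (A × Module.Dual F A) →ₗ[F] (A × Module.Dual F A) →ₗ[F] (A × Module.Dual F A)}
    (hM : IsFrobeniusDoubleProduct mA circ M)
    (hRd : ∀ (x y : A) (a : Module.Dual F A), Rd x a y = a (mA y x))
    (hLd : ∀ (x y : A) (a : Module.Dual F A), Ld x a y = a (mA x y))
    (hRo : ∀ (a b : Module.Dual F A) (x : A), b (Ro a x) = circ b a x)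
    (hLo : ∀ (a b : Module.Dual F A) (x : A), b (Lo a x) = circ a b x) :
    M = doubleMul mA circ Rd Ld Ro Lo := by
  ext x y : 4 <;>
    simp [hM.2.1, hM.2.2.1, hM.mul_inl_inr hRd hLo, hM.mul_inr_inl hLd hRo]

end FrobeniusDouble

theorem frobenius_double_iff_matchedPair_general
    {F A : Type*} [Field F] [AddCommGroup A] [Module F A]
    (mA : A →ₗ[F] A →ₗ[F] A)
    (circ : Module.Dual F A →ₗ[F] Module.Dual F A →ₗ[F] Module.Dual F A)
    -- the dual operators `R·*`, `L·*` on `A*`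
    (Rd Ld : A →ₗ[F] Module.Dual F A →ₗ[F] Module.Dual F A)
    (hRd : ∀ (x y : A) (a : Module.Dual F A), Rd x a y = a (mA y x))
    (hLd : ∀ (x y : A) (a : Module.Dual F A), Ld x a y = a (mA x y))
    -- the dual operators `R∘*`, `L∘*` on `A`
    (Ro Lo : Module.Dual F A →ₗ[F] A →ₗ[F] A)
    (hRo : ∀ (a b : Module.Dual F A) (x : A), b (Ro a x) = circ b a x)
    (hLo : ∀ (a b : Module.Dual F A) (x : A), b (Lo a x) = circ a b x) :
    ((∃ M, IsFrobeniusDoubleProduct mA circ M) ↔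
      IsMatchedPair mA circ Rd Ld Ro Lo) ∧
    (∀ M, IsFrobeniusDoubleProduct mA circ M →
      ∀ u v : A × Module.Dual F A, M u v =
        (mA u.1 v.1 + Ro u.2 v.1 + Lo v.2 u.1,
         circ u.2 v.2 + Rd u.1 v.2 + Ld v.1 u.2)) := by
  have unique : ∀ M, IsFrobeniusDoubleProduct mA circ M → M = doubleMul mA circ Rd Ld Ro Lo :=
    fun M hM => hM.eq_doubleMul hRd hLd hRo hLo
  refine ⟨?_, fun M hM u v => by rw [unique M hM, doubleMul_apply]⟩
  rw [← isAssocMul_doubleMul_iff, ← isFrobeniusDoubleProduct_doubleMul_iff hRd hLd hRo hLo]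
  exact ⟨fun ⟨M, hM⟩ => unique M hM ▸ hM, fun h => ⟨_, h⟩⟩

/-- there is a double construction of Frobenius algebra associated to
`(A,·)` and `(A*,∘)` iff `(A, A*, R·*, L·*, R∘*, L∘*)` is a matched pair of
associative algebras, in which case the product is given by the explicit formula. -/
theorem frobenius_double_iff_matchedPair
    {F A : Type*} [Field F] [AddCommGroup A] [Module F A] [FiniteDimensional F A]
    (mA : A →ₗ[F] A →ₗ[F] A) (hA : IsAssocMul mA)
    (circ : Module.Dual F A →ₗ[F] Module.Dual F A →ₗ[F] Module.Dual F A)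
    (hC : IsAssocMul circ)
    -- the dual operators `R·*`, `L·*` on `A*`
    (Rd Ld : A →ₗ[F] Module.Dual F A →ₗ[F] Module.Dual F A)
    (hRd : ∀ (x y : A) (a : Module.Dual F A), Rd x a y = a (mA y x))
    (hLd : ∀ (x y : A) (a : Module.Dual F A), Ld x a y = a (mA x y))
    -- the dual operators `R∘*`, `L∘*` on `A`
    (Ro Lo : Module.Dual F A →ₗ[F] A →ₗ[F] A)
    (hRo : ∀ (a b : Module.Dual F A) (x : A), b (Ro a x) = circ b a x)
    (hLo : ∀ (a b : Module.Dual F A) (x : A), b (Lo a x) = circ a b x) :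
    ((∃ M, IsFrobeniusDoubleProduct mA circ M) ↔
      IsMatchedPair mA circ Rd Ld Ro Lo) ∧
    (∀ M, IsFrobeniusDoubleProduct mA circ M →
      ∀ u v : A × Module.Dual F A, M u v =
        (mA u.1 v.1 + Ro u.2 v.1 + Lo v.2 u.1,
         circ u.2 v.2 + Rd u.1 v.2 + Ld v.1 u.2)) :=
  frobenius_double_iff_matchedPair_general mA circ Rd Ld hRd hLd Ro Lo hRo hLo
end

section
/- Let (A,·) be a finite-dimensional (nonunital) associative algebra over a field F and let ∘ be an associative product on A*. Then (A, A*, R·*, L·*, R∘*, L∘*) is a matched pair of associative algebras if and only if for all x ∈ A and a*, b* ∈ A*: (i) R·*(x)(a*∘b*) = R·*(L∘*(a*)x)b* + (R·*(x)a*)∘b*, and (ii) R·*(R∘*(a*)x)b* + (L·*(x)a*)∘b* = L·*(L∘*(b*)x)a* + a*∘(R·*(x)b*). -/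
open TensorProduct LinearMap

/-- `(A, A*, R·*, L·*, R∘*, L∘*)` is a matched pair of associative
algebras iff the two equations (2.2.1) and (2.2.2) hold. -/
theorem matchedPair_dual_iff_two_equations
    {F A : Type*} [Field F] [AddCommGroup A] [Module F A] [FiniteDimensional F A]
    (mA : A →ₗ[F] A →ₗ[F] A) (hA : IsAssocMul mA)
    (circ : Module.Dual F A →ₗ[F] Module.Dual F A →ₗ[F] Module.Dual F A)
    (hC : IsAssocMul circ)
    (Rd Ld : A →ₗ[F] Module.Dual F A →ₗ[F] Module.Dual F A)
    (hRd : ∀ (x y : A) (a : Module.Dual F A), Rd x a y = a (mA y x))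
    (hLd : ∀ (x y : A) (a : Module.Dual F A), Ld x a y = a (mA x y))
    (Ro Lo : Module.Dual F A →ₗ[F] A →ₗ[F] A)
    (hRo : ∀ (a b : Module.Dual F A) (x : A), b (Ro a x) = circ b a x)
    (hLo : ∀ (a b : Module.Dual F A) (x : A), b (Lo a x) = circ a b x) :
    IsMatchedPair mA circ Rd Ld Ro Lo ↔
      ((∀ (x : A) (a b : Module.Dual F A),
          Rd x (circ a b) = Rd (Lo a x) b + circ (Rd x a) b) ∧
       (∀ (x : A) (a b : Module.Dual F A),
          Rd (Ro a x) b + circ (Ld x a) b = Ld (Lo b x) a + circ a (Rd x b))) := by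
  have extA : ∀ {u v : A}, (∀ f : Module.Dual F A, f u = f v) → u = v := by
    intro u v h
    rw [← sub_eq_zero]
    exact (Module.forall_dual_apply_eq_zero_iff F (u - v)).mp fun f => by
      simp [h f]
  constructor
  · rintro ⟨-, -, -, -, h4, -, -, -, h8, -⟩
    refine ⟨h4, fun x a b => ?_⟩
    have h := h8 x a b
    rw [sub_sub, sub_eq_zero] at h
    exact h
  · rintro ⟨h1, h2⟩
    have e1 : ∀ (x y : A) (a b : Module.Dual F A),
        circ a b (mA y x) = circ a (Ld y b) x + circ (Rd x a) b y := by
      intro x y a b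
      have h := LinearMap.congr_fun (h1 x a b) y
      simp only [LinearMap.add_apply] at h
      rw [hRd x y (circ a b), hRd (Lo a x) y b, ← hLd y (Lo a x) b,
        hLo a (Ld y b) x] at h
      exact h
    have e2 : ∀ (x y : A) (a b : Module.Dual F A),
        circ (Ld y b) a x + circ (Ld x a) b y
          = circ b (Rd y a) x + circ a (Rd x b) y := by
      intro x y a b
      have h := LinearMap.congr_fun (h2 x a b) y
      simp only [LinearMap.add_apply] at h
      rw [hRd (Ro a x) y b, ← hLd y (Ro a x) b, hRo a (Ld y b) x,
        hLd (Lo b x) y a, ← hRd y (Lo b x) a, hLo b (Rd y a) x] at h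
      exact h
    refine ⟨hA, hC, ⟨?_, ?_, ?_⟩, ⟨?_, ?_, ?_⟩, h1, ?_, ?_, ?_, ?_, ?_⟩
    · intro x y a; ext z
      simp only [hRd, hLd]
      exact (congrArg a (hA z x y)).symm
    · intro x y a; ext z
      simp only [hRd, hLd]
      exact congrArg a (hA x y z)
    · intro x y a; ext z
      simp only [hRd, hLd]
      exact (congrArg a (hA y z x)).symm
    · intro a b x
      refine extA fun c => ?_
      simp only [hRo, hLo]
      exact (LinearMap.congr_fun (hC c a b) x).symm
    · intro a b x
      refine extA fun c => ?_
      simp only [hRo, hLo]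
      exact LinearMap.congr_fun (hC a b c) x
    · intro a b x
      refine extA fun c => ?_
      simp only [hRo, hLo]
      exact (LinearMap.congr_fun (hC b c a) x).symm
    · intro x a b
      ext y
      simp only [LinearMap.add_apply]
      rw [hLd x y (circ a b), hLd (Ro b x) y a, ← hRd y (Ro b x) a,
        hRo b (Rd y a) x]
      linear_combination e1 y x a b
    · intro a x y
      refine extA fun c => ?_
      rw [map_add, hRo a c (mA x y), hRo (Ld x a) c y, ← hRd y (Ro a x) c,
        hRo a (Rd y c) x]
      exact e1 y x c a
    · intro a x y
      refine extA fun c => ?_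
      rw [map_add, hLo a c (mA x y), hLo (Rd y a) c x, ← hLd x (Lo a y) c,
        hLo a (Ld x c) y]
      linear_combination e1 y x a c
    · intro x a b
      rw [sub_sub, sub_eq_zero]
      exact h2 x a b
    · intro a x y
      refine extA fun c => ?_
      rw [map_sub, map_sub, map_add, map_zero, hRo (Rd x a) c y,
        ← hRd y (Lo a x) c, hLo a (Rd y c) x, hLo (Ld y a) c x,
        ← hLd x (Ro a y) c, hRo a (Ld x c) y]
      linear_combination -e2 x y c a
end

section
/- Let (A,·) be a finite-dimensional (nonunital) associative algebra over a field F and let Δ : A → A⊗A be a linear map whose dual Δ* : A*⊗A* → A* defines an associative product ∘ on A* (i.e. ⟨Δ(x), a*⊗b*⟩ = ⟨x, a*∘b*⟩). Then (A, A*, R·*, L·*, R∘*, L∘*) is a matched pair of associative algebras if and only if Δ satisfies, for all x,y ∈ A: (i) Δ(x·y) = (id ⊗ L(x))Δ(y) + (R(y) ⊗ id)Δ(x), and (ii) (L(y) ⊗ id − id ⊗ R(y))Δ(x) + σ[(L(x) ⊗ id − id ⊗ R(x))Δ(y)] = 0, where σ : A⊗A → A⊗A is the flip σ(u⊗v) =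 v⊗u. -/
open TensorProduct LinearMap

section Aux

variable {F A : Type*} [Field F] [AddCommGroup A] [Module F A]

lemma pair2_tmul (a b : Module.Dual F A) (x y : A) :
    pair2 a b (x ⊗ₜ[F] y) = a x * b y := by
  simp [pair2, smul_eq_mul]

lemma pair2_map (a b : Module.Dual F A) (f g : A →ₗ[F] A) (u : A ⊗[F] A) :
    pair2 a b (TensorProduct.map f g u) = pair2 (a ∘ₗ f) (b ∘ₗ g) u := by
  induction u using TensorProduct.induction_on with
  | zero => simp
  | tmul x y => simp [pair2_tmul]
  | add u v hu hv => simp [hu, hv]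

lemma pair2_comm (a b : Module.Dual F A) (u : A ⊗[F] A) :
    pair2 a b ((TensorProduct.comm F A A) u) = pair2 b a u := by
  induction u using TensorProduct.induction_on with
  | zero => simp
  | tmul x y => simp [pair2_tmul, mul_comm]
  | add u v hu hv => simp [hu, hv]

lemma pair2_eq_dualDistrib (a b : Module.Dual F A) (u : A ⊗[F] A) :
    pair2 a b u = TensorProduct.dualDistrib F A A (a ⊗ₜ b) u := by
  induction u using TensorProduct.induction_on with
  | zero => simp
  | tmul x y => simp [pair2_tmul]
  | add u v hu hv => simp [hu, hv]

lemma sepT [FiniteDimensional F A] (u : A ⊗[F] A)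
    (h : ∀ a b : Module.Dual F A, pair2 a b u = 0) : u = 0 := by
  rw [← Module.forall_dual_apply_eq_zero_iff F u]
  intro φ
  obtain ⟨t, ht⟩ := (TensorProduct.dualDistribEquiv F A A).surjective φ
  have ht' : φ = TensorProduct.dualDistrib F A A t := by
    rw [← ht]
    rfl
  rw [ht']
  clear ht ht' φ
  induction t using TensorProduct.induction_on with
  | zero => simp
  | tmul a b => rw [← pair2_eq_dualDistrib]; exact h a b
  | add s t hs ht => simp [hs, ht]

lemma sepA (u v : A) (h : ∀ f : Module.Dual F A, f u = f v) : u = v := by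
  rw [← sub_eq_zero, ← Module.forall_dual_apply_eq_zero_iff F (u - v)]
  intro φ
  simp [h φ]

end Aux

/-- `(A, A*, R·*, L·*, R∘*, L∘*)` is a matched pair iff
`Δ` satisfies the 1-cocycle condition (2.2.7) and the antisymmetry
condition (2.2.8). -/
theorem matchedPair_dual_iff_cocycle_conditions
    {F A : Type*} [Field F] [AddCommGroup A] [Module F A] [FiniteDimensional F A]
    (mA : A →ₗ[F] A →ₗ[F] A) (hA : IsAssocMul mA)
    (circ : Module.Dual F A →ₗ[F] Module.Dual F A →ₗ[F] Module.Dual F A)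
    (hC : IsAssocMul circ)
    (Δ : A →ₗ[F] A ⊗[F] A)
    (hΔ : ∀ (a b : Module.Dual F A) (x : A), pair2 a b (Δ x) = circ a b x)
    (Rd Ld : A →ₗ[F] Module.Dual F A →ₗ[F] Module.Dual F A)
    (hRd : ∀ (x y : A) (a : Module.Dual F A), Rd x a y = a (mA y x))
    (hLd : ∀ (x y : A) (a : Module.Dual F A), Ld x a y = a (mA x y))
    (Ro Lo : Module.Dual F A →ₗ[F] A →ₗ[F] A)
    (hRo : ∀ (a b : Module.Dual F A) (x : A), b (Ro a x) = circ b a x)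
    (hLo : ∀ (a b : Module.Dual F A) (x : A), b (Lo a x) = circ a b x) :
    IsMatchedPair mA circ Rd Ld Ro Lo ↔
      ((∀ x y : A, Δ (mA x y) =
          TensorProduct.map (LinearMap.id : A →ₗ[F] A) (mA x) (Δ y) +
          TensorProduct.map (mA.flip y) (LinearMap.id : A →ₗ[F] A) (Δ x)) ∧
       (∀ x y : A,
          (TensorProduct.map (mA y) (LinearMap.id : A →ₗ[F] A) -
            TensorProduct.map (LinearMap.id : A →ₗ[F] A) (mA.flip y)) (Δ x) +
          (TensorProduct.comm F A A)
            ((TensorProduct.map (mA x) (LinearMap.id : A →ₗ[F] A) -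
              TensorProduct.map (LinearMap.id : A →ₗ[F] A) (mA.flip x)) (Δ y)) = 0)) := by
  have hΔ2 : ∀ (a b : Module.Dual F A) (x : A), pair2 a b (Δ x) = circ a b x := hΔ
  have hcompL : ∀ (x : A) (b : Module.Dual F A), b ∘ₗ mA x = Ld x b := by
    intro x b; ext z
    simp only [LinearMap.comp_apply]
    exact (hLd x z b).symm
  have hcompR : ∀ (y : A) (a : Module.Dual F A), a ∘ₗ mA.flip y = Rd y a := by
    intro y a; ext z
    simp only [LinearMap.comp_apply, LinearMap.flip_apply]
    exact (hRd y z a).symm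
  have e1 : ∀ (f a : Module.Dual F A) (x y : A),
      f (mA (Ro a x) y) = circ (Rd y f) a x := by
    intro f a x y; rw [← hRd, hRo]
  have e2 : ∀ (f a : Module.Dual F A) (x y : A),
      f (mA y (Ro a x)) = circ (Ld y f) a x := by
    intro f a x y; rw [← hLd, hRo]
  have e3 : ∀ (f a : Module.Dual F A) (x y : A),
      f (mA (Lo a x) y) = circ a (Rd y f) x := by
    intro f a x y; rw [← hRd, hLo]
  have e4 : ∀ (f a : Module.Dual F A) (x y : A),
      f (mA x (Lo a y)) = circ a (Ld x f) y := by
    intro f a x y; rw [← hLd, hLo]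
  have PiIff : (∀ x y : A, Δ (mA x y) =
        TensorProduct.map (LinearMap.id : A →ₗ[F] A) (mA x) (Δ y) +
        TensorProduct.map (mA.flip y) (LinearMap.id : A →ₗ[F] A) (Δ x)) ↔
      (∀ (x y : A) (a b : Module.Dual F A),
        circ a b (mA x y) = circ a (Ld x b) y + circ (Rd y a) b x) := by
    constructor
    · intro hi x y a b
      have h := congrArg (pair2 a b) (hi x y)
      simp only [map_add, pair2_map, LinearMap.comp_id, hcompL, hcompR, hΔ2] at h
      exact h
    · intro hp x y
      rw [← sub_eq_zero]
      refine sepT _ fun a b => ?_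
      simp only [map_sub, map_add, pair2_map, LinearMap.comp_id, hcompL, hcompR, hΔ2]
      linear_combination hp x y a b
  have PiiIff : (∀ x y : A,
        (TensorProduct.map (mA y) (LinearMap.id : A →ₗ[F] A) -
          TensorProduct.map (LinearMap.id : A →ₗ[F] A) (mA.flip y)) (Δ x) +
        (TensorProduct.comm F A A)
          ((TensorProduct.map (mA x) (LinearMap.id : A →ₗ[F] A) -
            TensorProduct.map (LinearMap.id : A →ₗ[F] A) (mA.flip x)) (Δ y)) = 0) ↔
      (∀ (x y : A) (a b : Module.Dual F A),
        circ (Ld y a) b x - circ a (Rd y b) x +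
          (circ (Ld x b) a y - circ b (Rd x a) y) = 0) := by
    constructor
    · intro hii x y a b
      have h := congrArg (pair2 a b) (hii x y)
      simp only [map_add, map_sub, map_zero, LinearMap.sub_apply, pair2_comm, pair2_map,
        LinearMap.comp_id, hcompL, hcompR, hΔ2] at h
      linear_combination h
    · intro hp x y
      refine sepT _ fun a b => ?_
      simp only [map_add, map_sub, LinearMap.sub_apply, pair2_comm, pair2_map,
        LinearMap.comp_id, hcompL, hcompR, hΔ2]
      linear_combination hp x y a b
  constructor
  · rintro ⟨-, -, -, -, c5, c6, c7, c8, c9, c10⟩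
    constructor
    · refine PiIff.mpr fun x y a b => ?_
      have h : a (Ro b (mA x y)) = a (Ro (Ld x b) y + mA (Ro b x) y) := by rw [c7]
      simp only [map_add, hRo, e1] at h
      exact h
    · refine PiiIff.mpr fun x y a b => ?_
      have h : b (Ro (Rd x a) y + mA (Lo a x) y - Lo (Ld y a) x - mA x (Ro a y))
          = b 0 := by rw [c10]
      simp only [map_add, map_sub, map_zero, hRo, hLo, e2, e3] at h
      linear_combination -h
  · rintro ⟨hi, hii⟩
    have Pi := PiIff.mp hi
    have Pii := PiiIff.mp hii
    refine ⟨hA, hC, ⟨?_, ?_, ?_⟩, ⟨?_, ?_, ?_⟩, ?_, ?_, ?_, ?_, ?_, ?_⟩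
    · intro x y v; ext z
      simp only [hRd]
      rw [hA]
    · intro x y v; ext z
      simp only [hLd]
      rw [hA]
    · intro x y v; ext z
      simp only [hRd, hLd]
      rw [hA]
    · intro a b x
      refine sepA (F := F) _ _ fun f => ?_
      simp only [hRo]
      rw [hC]
    · intro a b x
      refine sepA (F := F) _ _ fun f => ?_
      simp only [hLo]
      rw [hC]
    · intro a b x
      refine sepA (F := F) _ _ fun f => ?_
      simp only [hRo, hLo]
      rw [hC]
    · -- condition 5
      intro x a b; ext y
      simp only [LinearMap.add_apply, hRd, e4]
      linear_combination Pi y x a b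
    · -- condition 6
      intro x a b; ext y
      simp only [LinearMap.add_apply, hLd, e1]
      linear_combination Pi x y a b
    · -- condition 7
      intro a x y
      refine sepA (F := F) _ _ fun f => ?_
      simp only [map_add, hRo, e1]
      linear_combination Pi x y f a
    · -- condition 8
      intro a x y
      refine sepA (F := F) _ _ fun f => ?_
      simp only [map_add, hLo, e4]
      linear_combination Pi x y a f
    · -- condition 9
      intro x a b; ext y
      simp only [LinearMap.add_apply, LinearMap.sub_apply, LinearMap.zero_apply,
        hRd, hLd, e2, e3]
      linear_combination Pii x y b a
    · -- condition 10
      intro a x y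
      refine sepA (F := F) _ _ fun f => ?_
      simp only [map_add, map_sub, map_zero, hRo, hLo, e2, e3]
      linear_combination -Pii x y a f
end

section
/- Let (A,·) be a (nonunital) associative algebra over a field F and r ∈ A⊗A. Define Δ : A → A⊗A by Δ(x) = (id ⊗ L(x) − R(x) ⊗ id)r. Then Δ satisfies the equation (L(y) ⊗ id − id ⊗ R(y))Δ(x) + σ[(L(x) ⊗ id − id ⊗ R(x))Δ(y)] = 0 for all x,y ∈ A if and only if [L(x) ⊗ id − id ⊗ R(x)][id ⊗ L(y) − R(y) ⊗ id](r + σ(r)) = 0 for all x,y ∈ A, where σ : A⊗A → A⊗A is the flip σ(u⊗v) = v⊗u. -/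
open TensorProduct LinearMap

private lemma key_228 {F A : Type*} [Field F] [AddCommGroup A] [Module F A]
    (mA : A →ₗ[F] A →ₗ[F] A) (hA : IsAssocMul mA) (x y : A) (r : A ⊗[F] A) :
    (TensorProduct.map (mA y) (LinearMap.id : A →ₗ[F] A) -
        TensorProduct.map (LinearMap.id : A →ₗ[F] A) (mA.flip y))
      ((TensorProduct.map (LinearMap.id : A →ₗ[F] A) (mA x) -
        TensorProduct.map (mA.flip x) (LinearMap.id : A →ₗ[F] A)) r) +
    (TensorProduct.comm F A A)
      ((TensorProduct.map (mA x) (LinearMap.id : A →ₗ[F] A) -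
        TensorProduct.map (LinearMap.id : A →ₗ[F] A) (mA.flip x))
       ((TensorProduct.map (LinearMap.id : A →ₗ[F] A) (mA y) -
        TensorProduct.map (mA.flip y) (LinearMap.id : A →ₗ[F] A)) r)) =
    (TensorProduct.map (mA y) (LinearMap.id : A →ₗ[F] A) -
        TensorProduct.map (LinearMap.id : A →ₗ[F] A) (mA.flip y))
      ((TensorProduct.map (LinearMap.id : A →ₗ[F] A) (mA x) -
        TensorProduct.map (mA.flip x) (LinearMap.id : A →ₗ[F] A))
        (r + (TensorProduct.comm F A A) r)) := by
  have hA' : ∀ p q s : A, mA (mA p q) s = mA p (mA q s) := hA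
  induction r using TensorProduct.induction_on with
  | zero => simp
  | tmul a b =>
      simp only [map_sub, map_add, TensorProduct.map_tmul, TensorProduct.comm_tmul,
        LinearMap.id_coe, id_eq, LinearMap.sub_apply, LinearMap.flip_apply, hA']
      abel
  | add u v hu hv =>
      simp only [map_add] at hu hv ⊢
      rw [add_add_add_comm, hu, hv, ← add_add_add_comm]

/-- for `Δ(x) = (id ⊗ L(x) − R(x) ⊗ id) r`, the condition (2.2.8)
holds iff `[L(x) ⊗ id − id ⊗ R(x)][id ⊗ L(y) − R(y) ⊗ id](r + σ(r)) = 0`. -/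
theorem condition_228_iff_symmetric_part
    {F A : Type*} [Field F] [AddCommGroup A] [Module F A]
    (mA : A →ₗ[F] A →ₗ[F] A) (hA : IsAssocMul mA)
    (r : A ⊗[F] A)
    (Δ : A →ₗ[F] A ⊗[F] A)
    (hΔ : ∀ x : A, Δ x =
      TensorProduct.map (LinearMap.id : A →ₗ[F] A) (mA x) r -
      TensorProduct.map (mA.flip x) (LinearMap.id : A →ₗ[F] A) r) :
    (∀ x y : A,
      (TensorProduct.map (mA y) (LinearMap.id : A →ₗ[F] A) -
        TensorProduct.map (LinearMap.id : A →ₗ[F] A) (mA.flip y)) (Δ x) +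
      (TensorProduct.comm F A A)
        ((TensorProduct.map (mA x) (LinearMap.id : A →ₗ[F] A) -
          TensorProduct.map (LinearMap.id : A →ₗ[F] A) (mA.flip x)) (Δ y)) = 0) ↔
    (∀ x y : A,
      (TensorProduct.map (mA x) (LinearMap.id : A →ₗ[F] A) -
        TensorProduct.map (LinearMap.id : A →ₗ[F] A) (mA.flip x))
      ((TensorProduct.map (LinearMap.id : A →ₗ[F] A) (mA y) -
        TensorProduct.map (mA.flip y) (LinearMap.id : A →ₗ[F] A))
        (r + (TensorProduct.comm F A A) r)) = 0) := by
  have hrw : ∀ x y : A,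
      (TensorProduct.map (mA y) (LinearMap.id : A →ₗ[F] A) -
        TensorProduct.map (LinearMap.id : A →ₗ[F] A) (mA.flip y)) (Δ x) +
      (TensorProduct.comm F A A)
        ((TensorProduct.map (mA x) (LinearMap.id : A →ₗ[F] A) -
          TensorProduct.map (LinearMap.id : A →ₗ[F] A) (mA.flip x)) (Δ y)) =
      (TensorProduct.map (mA y) (LinearMap.id : A →ₗ[F] A) -
        TensorProduct.map (LinearMap.id : A →ₗ[F] A) (mA.flip y))
      ((TensorProduct.map (LinearMap.id : A →ₗ[F] A) (mA x) -
        TensorProduct.map (mA.flip x) (LinearMap.id : A →ₗ[F] A))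
        (r + (TensorProduct.comm F A A) r)) := by
    intro x y
    rw [← key_228 mA hA x y r, hΔ x, hΔ y]
    simp only [LinearMap.sub_apply, map_sub]
  constructor
  · intro h x y
    have := h y x
    rwa [hrw y x] at this
  · intro h x y
    rw [hrw x y]
    exact h y x
end

section
/- Let (A,·) and (A*,∘) be finite-dimensional (nonunital) associative algebras on dual spaces such that (A, A*, R·*, L·*, R∘*, L∘*) is a matched pair of associative algebras, and let AD(A) = A ⊕ A* be the resulting associative algebra with product (x+a*)*(y+b*) = (x·y + R∘*(a*)y + L∘*(b*)x) + (a*∘b* + R·*(x)b* + L·*(y)a*). Let {e_1,…,e_n} be a basis of A, {e_1*,…,e_n*} its dual basis, and r = Σ_i e_i ⊗ e_i* ∈ AD(A) ⊗ AD(A). Then: (i) (id ⊗ L(μ) − R(μ) ⊗ id)(r + σ(r)) = 0 for every μ ∈ AD(A), and (ii) r satisfies the associative Yang–Baxter equation r₁₂r₁₃ + r₁₃r₂₃ − r₂₃r₁₂ = 0 in AD(A). -/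
open TensorProduct LinearMap

/-!
The pairing `⟨(x, a), (y, b)⟩ = a y + b x` on `AD(A) = A ⊕ A*` is symmetric, and it is invariant,
`⟨u v, w⟩ = ⟨u, v w⟩`, because the actions of `A` on `A*` and of `A*` on `A` are the dual ones.
The subalgebras `A` and `A*` are isotropic, and the basis `(eᵢ, 0), (0, eᵢ*)` of `AD(A)` is its own
dual basis with the two halves swapped. Hence `r + σ(r)` is the Casimir element of an invariant
form, which intertwines left multiplication on the second factor with right multiplication on the
first: this is (i). In the coordinates of `r₁₂r₁₃ + r₁₃r₂₃ − r₂₃r₁₂`, isotropy kills all but two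
patterns, and there the two surviving terms cancel by invariance: this is (ii).
-/

section Casimir

variable {R V : Type*} [CommRing R] [AddCommGroup V] [Module R V] {κ : Type*} [Fintype κ]

theorem sum_tmul_swap_eq_sum_swap_tmul {ι : Type*} [Fintype ι] (f : ι ⊕ ι → V) :
    ∑ p, f p ⊗ₜ[R] f p.swap = ∑ p, f p.swap ⊗ₜ[R] f p := by
  simp only [Fintype.sum_sum_type, Sum.swap_inl, Sum.swap_inr, add_comm]

theorem Module.Basis.tensorProduct_repr_map_id_sum_tmul (b : Module.Basis κ R V) (b' : κ → V)
    (T : V →ₗ[R] V) (p q : κ) :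
    (b.tensorProduct b).repr (map LinearMap.id T (∑ s, b s ⊗ₜ b' s)) (p, q) =
      b.repr (T (b' p)) q := by
  classical
  simp [map_sum, Finsupp.single_apply]

theorem Module.Basis.tensorProduct_repr_map_sum_tmul_id (b : Module.Basis κ R V) (b' : κ → V)
    (T : V →ₗ[R] V) (p q : κ) :
    (b.tensorProduct b).repr (map T LinearMap.id (∑ s, b' s ⊗ₜ b s)) (p, q) =
      b.repr (T (b' q)) p := by
  classical
  simp [map_sum, Finsupp.single_apply]

theorem map_id_casimir_eq_map_casimir_id (b : Module.Basis κ R V) (m : V →ₗ[R] V →ₗ[R] V)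
    (ω : V → V → R) (hsymm : ∀ u v, ω u v = ω v u) (hinv : ∀ u v w, ω (m u v) w = ω u (m v w))
    (b' : κ → V) (hb' : ∀ p w, ω (b' p) w = b.repr w p)
    (hC : ∑ s, b s ⊗ₜ b' s = ∑ s, b' s ⊗ₜ[R] b s) (μ : V) :
    map LinearMap.id (m μ) (∑ s, b s ⊗ₜ b' s) =
      map (m.flip μ) LinearMap.id (∑ s, b s ⊗ₜ b' s) := by
  refine (b.tensorProduct b).ext_elem fun ⟨p, q⟩ => ?_
  rw [b.tensorProduct_repr_map_id_sum_tmul, hC, b.tensorProduct_repr_map_sum_tmul_id, ← hb', ← hb',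
    flip_apply, ← hinv, hsymm]

end Casimir

section YangBaxter

variable {F V : Type*} [Field F] [AddCommGroup V] [Module F V]

@[simp]
theorem t12_tmul (m : V →ₗ[F] V →ₗ[F] V) (x y x' y' : V) :
    t12 m ((x ⊗ₜ y) ⊗ₜ (x' ⊗ₜ y')) = m x x' ⊗ₜ (y ⊗ₜ y') := by
  simp [t12]

@[simp]
theorem t13_tmul (m : V →ₗ[F] V →ₗ[F] V) (x y x' y' : V) :
    t13 m ((x ⊗ₜ y) ⊗ₜ (x' ⊗ₜ y')) = x ⊗ₜ (x' ⊗ₜ m y y') := by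
  simp [t13]

@[simp]
theorem t23_tmul (m : V →ₗ[F] V →ₗ[F] V) (x y x' y' : V) :
    t23 m ((x ⊗ₜ y) ⊗ₜ (x' ⊗ₜ y')) = x' ⊗ₜ (m x y' ⊗ₜ y) := by
  simp [t23]

theorem aybE_sum_tmul {ι : Type*} [Fintype ι] (m : V →ₗ[F] V →ₗ[F] V) (u v : ι → V) :
    aybE m (∑ i, u i ⊗ₜ v i) = ∑ i, ∑ j,
      (m (u i) (u j) ⊗ₜ (v i ⊗ₜ v j) + u i ⊗ₜ (u j ⊗ₜ m (v i) (v j)) -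
        u j ⊗ₜ (m (u i) (v j) ⊗ₜ v i)) := by
  simp only [aybE, sum_tmul]
  simp only [tmul_sum]
  simp [map_sum, Finset.sum_add_distrib, Finset.sum_sub_distrib]

end YangBaxter

section ManinTriple

variable {F V : Type*} [Field F] [AddCommGroup V] [Module F V] {ι : Type*} [Fintype ι]
  (b : Module.Basis (ι ⊕ ι) F V) (m : V →ₗ[F] V →ₗ[F] V) (ω : V → V → F)

theorem map_id_sub_map_flip_id_add_comm_eq_zero
    (hsymm : ∀ u v, ω u v = ω v u) (hinv : ∀ u v w, ω (m u v) w = ω u (m v w))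
    (hb : ∀ p w, ω (b p.swap) w = b.repr w p) (r : V ⊗[F] V)
    (hr : r = ∑ i, b (.inl i) ⊗ₜ[F] b (.inr i)) (μ : V) :
    map LinearMap.id (m μ) (r + TensorProduct.comm F V V r) -
      map (m.flip μ) LinearMap.id (r + TensorProduct.comm F V V r) = 0 := by
  have hC : r + TensorProduct.comm F V V r = ∑ p, b p ⊗ₜ[F] b p.swap := by
    simp [hr, Fintype.sum_sum_type, map_sum]
  rw [hC, sub_eq_zero]
  exact map_id_casimir_eq_map_casimir_id b m ω hsymm hinv _ hb
    (sum_tmul_swap_eq_sum_swap_tmul _) μ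

theorem aybE_sum_inl_tmul_inr_eq_zero
    (hsymm : ∀ u v, ω u v = ω v u) (hinv : ∀ u v w, ω (m u v) w = ω u (m v w))
    (hb : ∀ p w, ω (b p.swap) w = b.repr w p)
    (hinl : ∀ i j k, ω (b (.inl i)) (m (b (.inl j)) (b (.inl k))) = 0)
    (hinr : ∀ i j k, ω (b (.inr i)) (m (b (.inr j)) (b (.inr k))) = 0) :
    aybE m (∑ i, b (.inl i) ⊗ₜ b (.inr i)) = 0 := by
  classical
  have hcyc : ∀ x y z, ω z (m x y) = ω x (m y z) := fun x y z => by rw [hsymm, hinv]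
  have hrrl : ∀ i j k, ω (b (.inr k)) (m (b (.inl j)) (b (.inr i))) =
      ω (b (.inl j)) (m (b (.inr i)) (b (.inr k))) := fun _ _ _ => hcyc _ _ _
  have hrll : ∀ i j k, ω (b (.inr i)) (m (b (.inl j)) (b (.inl k))) =
      ω (b (.inl j)) (m (b (.inl k)) (b (.inr i))) := fun _ _ _ => hcyc _ _ _
  rw [aybE_sum_tmul]
  refine (b.tensorProduct (b.tensorProduct b)).ext_elem fun ⟨p, q, s⟩ => ?_
  rcases p with i | i <;> rcases q with j | j <;> rcases s with k | k <;>
    simp [map_sum, Finsupp.single_apply, ← hb, hinl, hinr, hrrl, hrll]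

end ManinTriple

section AssociativeDouble

variable {F A : Type*} [Field F] [AddCommGroup A] [Module F A]

def prodDualPairing (u v : A × Module.Dual F A) : F := u.2 v.1 + v.2 u.1

theorem prodDualPairing_comm (u v : A × Module.Dual F A) :
    prodDualPairing u v = prodDualPairing v u :=
  add_comm _ _

theorem prodDualPairing_basis_swap {ι : Type*} [Finite ι] [DecidableEq ι]
    (bA : Module.Basis ι F A) (p : ι ⊕ ι) (w : A × Module.Dual F A) :
    prodDualPairing ((bA.prod bA.dualBasis) p.swap) w = (bA.prod bA.dualBasis).repr w p := by
  rcases p with i | i <;> simp [prodDualPairing]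

theorem prodDualPairing_invariant
    (mA : A →ₗ[F] A →ₗ[F] A)
    (circ : Module.Dual F A →ₗ[F] Module.Dual F A →ₗ[F] Module.Dual F A)
    (Rd Ld : A →ₗ[F] Module.Dual F A →ₗ[F] Module.Dual F A)
    (hRd : ∀ (x y : A) (a : Module.Dual F A), Rd x a y = a (mA y x))
    (hLd : ∀ (x y : A) (a : Module.Dual F A), Ld x a y = a (mA x y))
    (Ro Lo : Module.Dual F A →ₗ[F] A →ₗ[F] A)
    (hRo : ∀ (a b : Module.Dual F A) (x : A), b (Ro a x) = circ b a x)
    (hLo : ∀ (a b : Module.Dual F A) (x : A), b (Lo a x) = circ a b x)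
    (M : (A × Module.Dual F A) →ₗ[F] (A × Module.Dual F A) →ₗ[F] (A × Module.Dual F A))
    (hM : ∀ u v : A × Module.Dual F A, M u v =
      (mA u.1 v.1 + Ro u.2 v.1 + Lo v.2 u.1, circ u.2 v.2 + Rd u.1 v.2 + Ld v.1 u.2))
    (u v w : A × Module.Dual F A) :
    prodDualPairing (M u v) w = prodDualPairing u (M v w) := by
  simp only [prodDualPairing, hM, map_add, LinearMap.add_apply, hRd, hLd, hRo, hLo]
  ring

end AssociativeDouble

theorem associative_double_canonical_r_general
    {F A : Type*} [Field F] [AddCommGroup A] [Module F A]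
    {ι : Type*} [Fintype ι] (bA : Module.Basis ι F A)
    (mA : A →ₗ[F] A →ₗ[F] A)
    (circ : Module.Dual F A →ₗ[F] Module.Dual F A →ₗ[F] Module.Dual F A)
    (Rd Ld : A →ₗ[F] Module.Dual F A →ₗ[F] Module.Dual F A)
    (hRd : ∀ (x y : A) (a : Module.Dual F A), Rd x a y = a (mA y x))
    (hLd : ∀ (x y : A) (a : Module.Dual F A), Ld x a y = a (mA x y))
    (Ro Lo : Module.Dual F A →ₗ[F] A →ₗ[F] A)
    (hRo : ∀ (a b : Module.Dual F A) (x : A), b (Ro a x) = circ b a x)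
    (hLo : ∀ (a b : Module.Dual F A) (x : A), b (Lo a x) = circ a b x)
    -- the associative double product on `AD(A) = A ⊕ A*`
    (M : (A × Module.Dual F A) →ₗ[F] (A × Module.Dual F A) →ₗ[F]
      (A × Module.Dual F A))
    (hM : ∀ u v : A × Module.Dual F A, M u v =
      (mA u.1 v.1 + Ro u.2 v.1 + Lo v.2 u.1,
       circ u.2 v.2 + Rd u.1 v.2 + Ld v.1 u.2))
    -- the canonical element `r = Σᵢ eᵢ ⊗ eᵢ*`
    (r : (A × Module.Dual F A) ⊗[F] (A × Module.Dual F A))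
    (hr : r = ∑ i : ι, ((bA i, 0) : A × Module.Dual F A) ⊗ₜ[F]
      (((0 : A), bA.coord i) : A × Module.Dual F A)) :
    (∀ μ : A × Module.Dual F A,
      TensorProduct.map
          (LinearMap.id : (A × Module.Dual F A) →ₗ[F] (A × Module.Dual F A)) (M μ)
        (r + (TensorProduct.comm F (A × Module.Dual F A) (A × Module.Dual F A)) r) -
      TensorProduct.map (M.flip μ)
          (LinearMap.id : (A × Module.Dual F A) →ₗ[F] (A × Module.Dual F A))
        (r + (TensorProduct.comm F (A × Module.Dual F A) (A × Module.Dual F A)) r) = 0) ∧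
    aybE M r = 0 := by
  classical
  have hinv := prodDualPairing_invariant mA circ Rd Ld hRd hLd Ro Lo hRo hLo M hM
  have hb := prodDualPairing_basis_swap bA
  have hr' : r = ∑ i, bA.prod bA.dualBasis (.inl i) ⊗ₜ[F] bA.prod bA.dualBasis (.inr i) := by
    simp [hr]
  refine ⟨map_id_sub_map_flip_id_add_comm_eq_zero _ M _ prodDualPairing_comm hinv hb r hr', ?_⟩
  rw [hr']
  exact aybE_sum_inl_tmul_inr_eq_zero _ M _ prodDualPairing_comm hinv hb
    (fun _ _ _ => by simp [prodDualPairing, hM]) (fun _ _ _ => by simp [prodDualPairing, hM])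

/-- in the associative double `AD(A) = A ⋈ A*` coming from a matched
pair `(A, A*, R·*, L·*, R∘*, L∘*)`, the canonical element `r = Σᵢ eᵢ ⊗ eᵢ*`
satisfies `(id ⊗ L(μ) − R(μ) ⊗ id)(r + σ(r)) = 0` for all `μ`, and the
associative Yang–Baxter equation `r₁₂r₁₃ + r₁₃r₂₃ − r₂₃r₁₂ = 0`. -/
theorem associative_double_canonical_r
    {F A : Type*} [Field F] [AddCommGroup A] [Module F A]
    {ι : Type*} [Fintype ι] (bA : Module.Basis ι F A)
    (mA : A →ₗ[F] A →ₗ[F] A) (hA : IsAssocMul mA)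
    (circ : Module.Dual F A →ₗ[F] Module.Dual F A →ₗ[F] Module.Dual F A)
    (hC : IsAssocMul circ)
    (Rd Ld : A →ₗ[F] Module.Dual F A →ₗ[F] Module.Dual F A)
    (hRd : ∀ (x y : A) (a : Module.Dual F A), Rd x a y = a (mA y x))
    (hLd : ∀ (x y : A) (a : Module.Dual F A), Ld x a y = a (mA x y))
    (Ro Lo : Module.Dual F A →ₗ[F] A →ₗ[F] A)
    (hRo : ∀ (a b : Module.Dual F A) (x : A), b (Ro a x) = circ b a x)
    (hLo : ∀ (a b : Module.Dual F A) (x : A), b (Lo a x) = circ a b x)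
    (hmp : IsMatchedPair mA circ Rd Ld Ro Lo)
    -- the associative double product on `AD(A) = A ⊕ A*`
    (M : (A × Module.Dual F A) →ₗ[F] (A × Module.Dual F A) →ₗ[F]
      (A × Module.Dual F A))
    (hM : ∀ u v : A × Module.Dual F A, M u v =
      (mA u.1 v.1 + Ro u.2 v.1 + Lo v.2 u.1,
       circ u.2 v.2 + Rd u.1 v.2 + Ld v.1 u.2))
    -- the canonical element `r = Σᵢ eᵢ ⊗ eᵢ*`
    (r : (A × Module.Dual F A) ⊗[F] (A × Module.Dual F A))
    (hr : r = ∑ i : ι, ((bA i, 0) : A × Module.Dual F A) ⊗ₜ[F]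
      (((0 : A), bA.coord i) : A × Module.Dual F A)) :
    (∀ μ : A × Module.Dual F A,
      TensorProduct.map
          (LinearMap.id : (A × Module.Dual F A) →ₗ[F] (A × Module.Dual F A)) (M μ)
        (r + (TensorProduct.comm F (A × Module.Dual F A) (A × Module.Dual F A)) r) -
      TensorProduct.map (M.flip μ)
          (LinearMap.id : (A × Module.Dual F A) →ₗ[F] (A × Module.Dual F A))
        (r + (TensorProduct.comm F (A × Module.Dual F A) (A × Module.Dual F A)) r) = 0) ∧
    aybE M r = 0 :=
  associative_double_canonical_r_general bA mA circ Rd Ld hRd hLd Ro Lo hRo hLo M hM r hr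
end

section
/- Let (A,·) be a finite-dimensional (nonunital) associative algebra over a field F and let r ∈ A⊗A be antisymmetric (σ(r) = −r). If r satisfies the associative Yang–Baxter equation r₁₂r₁₃ + r₁₃r₂₃ − r₂₃r₁₂ = 0, then the map Δ(x) = (id ⊗ L(x) − R(x) ⊗ id)r satisfies: (i) its dual Δ* defines an associative product on A*, and (ii) (L(y) ⊗ id − id ⊗ R(y))Δ(x) + σ[(L(x) ⊗ id − id ⊗ R(x))Δ(y)] = 0 for all x,y ∈ A. -/
open TensorProduct LinearMap

section AuxProof
variable {F A : Type*} [Field F] [AddCommGroup A] [Module F A]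
variable (mA : A →ₗ[F] A →ₗ[F] A)

/-- `Dop mA x = id ⊗ L(x) − R(x) ⊗ id`, linearly in `x`. -/
noncomputable def Dop : A →ₗ[F] (A ⊗[F] A →ₗ[F] A ⊗[F] A) :=
  (LinearMap.lTensorHom A).comp mA - (LinearMap.rTensorHom A).comp mA.flip

@[simp] lemma Dop_tmul (x a b : A) :
    Dop mA x (a ⊗ₜ[F] b) = a ⊗ₜ[F] mA x b - mA a x ⊗ₜ[F] b := by
  simp [Dop]

/-- `Dfl mA r` is the co-multiplication `y ↦ (id ⊗ L(y) − R(y) ⊗ id) r`. -/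
noncomputable def Dfl : (A ⊗[F] A) →ₗ[F] (A →ₗ[F] A ⊗[F] A) := (Dop mA).flip

@[simp] lemma Dfl_tmul (c d y : A) :
    Dfl mA (c ⊗ₜ[F] d) y = c ⊗ₜ[F] mA y d - mA c y ⊗ₜ[F] d := by
  simp [Dfl]

@[simp] lemma t12_tmul_s7 (a b c d : A) :
    t12 mA ((a ⊗ₜ[F] b) ⊗ₜ[F] (c ⊗ₜ[F] d)) = mA a c ⊗ₜ[F] (b ⊗ₜ[F] d) := by
  simp [t12]

@[simp] lemma t13_tmul_s7 (a b c d : A) :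
    t13 mA ((a ⊗ₜ[F] b) ⊗ₜ[F] (c ⊗ₜ[F] d)) = a ⊗ₜ[F] (c ⊗ₜ[F] mA b d) := by
  simp [t13]

@[simp] lemma t23_tmul_s7 (a b c d : A) :
    t23 mA ((a ⊗ₜ[F] b) ⊗ₜ[F] (c ⊗ₜ[F] d)) = c ⊗ₜ[F] (mA a d ⊗ₜ[F] b) := by
  simp [t23]

/-- Correction map for the coassociativity computation; it is paired with the
swap of the two big tensor factors, hence contributes nothing on `r ⊗ r`. -/
noncomputable def Kmap (x : A) :
    ((A ⊗[F] A) ⊗[F] (A ⊗[F] A)) →ₗ[F] A ⊗[F] (A ⊗[F] A) :=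
  -(LinearMap.lTensor A (LinearMap.lTensor A (mA x)) ∘ₗ t12 mA ∘ₗ
      (TensorProduct.comm F (A ⊗[F] A) (A ⊗[F] A)).toLinearMap)
  - (t23 mA ∘ₗ LinearMap.rTensor (A ⊗[F] A) (LinearMap.rTensor A (mA.flip x)))
  + (t12 mA ∘ₗ (TensorProduct.comm F (A ⊗[F] A) (A ⊗[F] A)).toLinearMap ∘ₗ
      LinearMap.rTensor (A ⊗[F] A) (LinearMap.rTensor A (mA.flip x)))
  - (LinearMap.rTensor (A ⊗[F] A) (mA.flip x) ∘ₗ t23 mA ∘ₗ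
      (TensorProduct.comm F (A ⊗[F] A) (A ⊗[F] A)).toLinearMap)

@[simp] lemma Kmap_tmul (x a b c d : A) :
    Kmap mA x ((a ⊗ₜ[F] b) ⊗ₜ[F] (c ⊗ₜ[F] d)) =
      -(mA c a ⊗ₜ[F] (d ⊗ₜ[F] mA x b)) - c ⊗ₜ[F] (mA (mA a x) d ⊗ₜ[F] b)
      + mA c (mA a x) ⊗ₜ[F] (d ⊗ₜ[F] b) - mA a x ⊗ₜ[F] (mA c b ⊗ₜ[F] d) := by
  simp [Kmap]

/-- `(Δ ⊗ id) Δx` as a lifted bilinear map of the two copies of `r`. -/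
noncomputable def G1 (x : A) :
    ((A ⊗[F] A) ⊗[F] (A ⊗[F] A)) →ₗ[F] A ⊗[F] (A ⊗[F] A) :=
  TensorProduct.lift
    ((((LinearMap.rTensorHom A).comp (Dfl mA)).flip.comp (Dop mA x)).compr₂
      (TensorProduct.assoc F A A A).toLinearMap)

/-- `(id ⊗ Δ) Δx` as a lifted bilinear map of the two copies of `r`. -/
noncomputable def G2 (x : A) :
    ((A ⊗[F] A) ⊗[F] (A ⊗[F] A)) →ₗ[F] A ⊗[F] (A ⊗[F] A) :=
  TensorProduct.lift
    ((((LinearMap.lTensorHom A).comp (Dfl mA)).flip).comp (Dop mA x))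

@[simp] lemma G1_tmul (x : A) (u v : A ⊗[F] A) :
    G1 mA x (u ⊗ₜ[F] v) =
      (TensorProduct.assoc F A A A)
        (LinearMap.rTensor A (Dfl mA v) (Dop mA x u)) := rfl

@[simp] lemma G2_tmul (x : A) (u v : A ⊗[F] A) :
    G2 mA x (u ⊗ₜ[F] v) = LinearMap.lTensor A (Dfl mA v) (Dop mA x u) := rfl

/-- The key identity behind coassociativity. -/
lemma KBmap (hA : IsAssocMul mA) (x : A) :
    G1 mA x - G2 mA x =
      (LinearMap.rTensor (A ⊗[F] A) (mA.flip x)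
          - LinearMap.lTensor A (LinearMap.lTensor A (mA x))) ∘ₗ
        (t12 mA + t13 mA - t23 mA)
      + Kmap mA x
      - Kmap mA x ∘ₗ (TensorProduct.comm F (A ⊗[F] A) (A ⊗[F] A)).toLinearMap := by
  have hA' : ∀ p q s : A, mA (mA p q) s = mA p (mA q s) := hA
  ext a b c d
  simp [tmul_sub, sub_tmul, tmul_add, add_tmul]
  simp only [hA']
  abel

/-- Coassociativity of the induced comultiplication. -/
lemma coassoc (hA : IsAssocMul mA) (r : A ⊗[F] A) (hayb : aybE mA r = 0) (x : A) :
    (TensorProduct.assoc F A A A) (LinearMap.rTensor A (Dfl mA r) (Dop mA x r)) =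
      LinearMap.lTensor A (Dfl mA r) (Dop mA x r) := by
  have h := LinearMap.congr_fun (KBmap mA hA x) (r ⊗ₜ[F] r)
  simp only [LinearMap.sub_apply, LinearMap.add_apply, LinearMap.comp_apply,
    LinearEquiv.coe_coe, TensorProduct.comm_tmul, G1_tmul, G2_tmul] at h
  rw [show t12 mA (r ⊗ₜ[F] r) + t13 mA (r ⊗ₜ[F] r) - t23 mA (r ⊗ₜ[F] r)
      = aybE mA r from rfl, hayb] at h
  simpa [sub_eq_zero] using h

/-- The linear-map identity behind condition (2.2.8). -/
lemma key2 (hA : IsAssocMul mA) (x y : A) :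
    (TensorProduct.map (mA y) (LinearMap.id : A →ₗ[F] A) -
        TensorProduct.map LinearMap.id (mA.flip y)) ∘ₗ Dop mA x =
      (TensorProduct.comm F A A).toLinearMap ∘ₗ
        (TensorProduct.map (mA x) (LinearMap.id : A →ₗ[F] A) -
          TensorProduct.map LinearMap.id (mA.flip x)) ∘ₗ
        Dop mA y ∘ₗ (TensorProduct.comm F A A).toLinearMap := by
  have hA' : ∀ p q s : A, mA (mA p q) s = mA p (mA q s) := hA
  ext u v
  simp [tmul_sub, sub_tmul]
  simp only [hA']
  abel

end AuxProof

/-- if `r` is antisymmetric and satisfies the associative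
Yang–Baxter equation, then `Δ(x) = (id ⊗ L(x) − R(x) ⊗ id) r` induces an
associative product on `A*` and satisfies condition (2.2.8). -/
theorem ayb_solution_gives_antisymmetric_bialgebra
    {F A : Type*} [Field F] [AddCommGroup A] [Module F A] [FiniteDimensional F A]
    (mA : A →ₗ[F] A →ₗ[F] A) (hA : IsAssocMul mA)
    (r : A ⊗[F] A)
    (hskew : (TensorProduct.comm F A A) r = -r)
    (hayb : aybE mA r = 0)
    (Δ : A →ₗ[F] A ⊗[F] A)
    (hΔ : ∀ x : A, Δ x =
      TensorProduct.map (LinearMap.id : A →ₗ[F] A) (mA x) r -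
      TensorProduct.map (mA.flip x) (LinearMap.id : A →ₗ[F] A) r)
    (circ : Module.Dual F A → Module.Dual F A → Module.Dual F A)
    (hcirc : ∀ (a b : Module.Dual F A) (x : A), circ a b x = pair2 a b (Δ x)) :
    (∀ a b c : Module.Dual F A, circ (circ a b) c = circ a (circ b c)) ∧
    (∀ x y : A,
      (TensorProduct.map (mA y) (LinearMap.id : A →ₗ[F] A) -
        TensorProduct.map (LinearMap.id : A →ₗ[F] A) (mA.flip y)) (Δ x) +
      (TensorProduct.comm F A A)
        ((TensorProduct.map (mA x) (LinearMap.id : A →ₗ[F] A) -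
          TensorProduct.map (LinearMap.id : A →ₗ[F] A) (mA.flip x)) (Δ y)) = 0) := by
  have hΔD : ∀ x : A, Δ x = Dop mA x r := fun x => by rw [hΔ x]; rfl
  have hΔfun : Δ = Dfl mA r := LinearMap.ext fun y => by rw [hΔ y]; rfl
  constructor
  · intro a b c
    have hw : ∀ (w : A ⊗[F] A) (v : A),
        (TensorProduct.lid F F) (TensorProduct.map a (pair2 b c)
          ((TensorProduct.assoc F A A A) (w ⊗ₜ[F] v))) = pair2 a b w * c v := by
      intro w v
      induction w using TensorProduct.induction_on with
      | zero => simp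
      | tmul p q => simp [pair2, mul_assoc, smul_eq_mul]
      | add w₁ w₂ ih₁ ih₂ => simp only [add_tmul, map_add, ih₁, ih₂, add_mul]
    have h5 : ∀ t : A ⊗[F] A, pair2 (circ a b) c t =
        (TensorProduct.lid F F) (TensorProduct.map a (pair2 b c)
          ((TensorProduct.assoc F A A A) (LinearMap.rTensor A Δ t))) := by
      intro t
      induction t using TensorProduct.induction_on with
      | zero => simp
      | tmul u v =>
        rw [LinearMap.rTensor_tmul, hw (Δ u) v]
        simp [pair2, hcirc, smul_eq_mul]
      | add t₁ t₂ ih₁ ih₂ => simp only [map_add, ih₁, ih₂]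
    have h6 : ∀ t : A ⊗[F] A, pair2 a (circ b c) t =
        (TensorProduct.lid F F) (TensorProduct.map a (pair2 b c)
          (LinearMap.lTensor A Δ t)) := by
      intro t
      induction t using TensorProduct.induction_on with
      | zero => simp
      | tmul u v => simp [pair2, hcirc, smul_eq_mul]
      | add t₁ t₂ ih₁ ih₂ => simp only [map_add, ih₁, ih₂]
    ext x
    rw [hcirc, hcirc, h5 (Δ x), h6 (Δ x), hΔfun,
      show (Dfl mA r) x = Dop mA x r from rfl,
      coassoc mA hA r hayb x]
  · intro x y
    have hk := LinearMap.congr_fun (key2 mA hA x y) r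
    simp only [LinearMap.comp_apply, LinearEquiv.coe_coe] at hk
    rw [hskew] at hk
    simp only [map_neg] at hk
    rw [hΔD x, hΔD y, hk]
    simp
end

section
/- Let (A,·) be a finite-dimensional (nonunital) associative algebra over a field F and let r ∈ A⊗A be antisymmetric. Then r satisfies the associative Yang–Baxter equation r₁₂r₁₃ + r₁₃r₂₃ − r₂₃r₁₂ = 0 if and only if the induced linear map r : A* → A satisfies r(a*)·r(b*) = r(R·*(r(a*))b* + L·*(r(b*))a*) for all a*, b* ∈ A*. -/
open TensorProduct LinearMap

section Aux

variable {F : Type*} [Field F]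

/-- Mixed pairing of duals with a tensor product. -/
noncomputable def pairM {M N : Type*} [AddCommGroup M] [Module F M]
    [AddCommGroup N] [Module F N]
    (f : Module.Dual F M) (g : Module.Dual F N) : (M ⊗[F] N) →ₗ[F] F :=
  (TensorProduct.lid F F).toLinearMap ∘ₗ TensorProduct.map f g

variable {M N : Type*} [AddCommGroup M] [Module F M] [AddCommGroup N] [Module F N]

lemma pairM_tmul (f : Module.Dual F M) (g : Module.Dual F N) (x : M) (y : N) :
    pairM f g (x ⊗ₜ[F] y) = f x * g y := by
  simp [pairM, smul_eq_mul]

lemma pairM_add_left (f f' : Module.Dual F M) (g : Module.Dual F N) (t : M ⊗[F] N) :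
    pairM (f + f') g t = pairM f g t + pairM f' g t := by
  induction t using TensorProduct.induction_on with
  | zero => simp
  | tmul x y => simp only [pairM_tmul, LinearMap.add_apply]; ring
  | add s t hs ht => simp only [map_add, hs, ht]; ring

lemma pairM_add_right (f : Module.Dual F M) (g g' : Module.Dual F N) (t : M ⊗[F] N) :
    pairM f (g + g') t = pairM f g t + pairM f g' t := by
  induction t using TensorProduct.induction_on with
  | zero => simp
  | tmul x y => simp only [pairM_tmul, LinearMap.add_apply]; ring
  | add s t hs ht => simp only [map_add, hs, ht]; ring

lemma pairM_zero_left (g : Module.Dual F N) (t : M ⊗[F] N) :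
    pairM (0 : Module.Dual F M) g t = 0 := by
  induction t using TensorProduct.induction_on with
  | zero => simp
  | tmul x y => simp [pairM_tmul]
  | add s t hs ht => simp [hs, ht]

lemma pairM_zero_right (f : Module.Dual F M) (t : M ⊗[F] N) :
    pairM f (0 : Module.Dual F N) t = 0 := by
  induction t using TensorProduct.induction_on with
  | zero => simp
  | tmul x y => simp [pairM_tmul]
  | add s t hs ht => simp [hs, ht]

lemma dualDistrib_tmul_eq_pairM (f : Module.Dual F M) (g : Module.Dual F N) :
    TensorProduct.dualDistrib F M N (f ⊗ₜ g) = pairM f g := by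
  apply TensorProduct.ext'
  intro x y
  simp [TensorProduct.dualDistrib_apply, pairM_tmul, smul_eq_mul]

lemma pair2_eq_pairM {A : Type*} [AddCommGroup A] [Module F A]
    (f g : Module.Dual F A) : pair2 f g = pairM f g := rfl

lemma pair2_add_left {A : Type*} [AddCommGroup A] [Module F A]
    (f f' g : Module.Dual F A) (t : A ⊗[F] A) :
    pair2 (f + f') g t = pair2 f g t + pair2 f' g t := pairM_add_left f f' g t

lemma pair2_add_right {A : Type*} [AddCommGroup A] [Module F A]
    (f g g' : Module.Dual F A) (t : A ⊗[F] A) :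
    pair2 f (g + g') t = pair2 f g t + pair2 f g' t := pairM_add_right f g g' t

lemma pair2_zero_left {A : Type*} [AddCommGroup A] [Module F A]
    (g : Module.Dual F A) (t : A ⊗[F] A) :
    pair2 (0 : Module.Dual F A) g t = 0 := pairM_zero_left g t

lemma pair2_zero_right {A : Type*} [AddCommGroup A] [Module F A]
    (f : Module.Dual F A) (t : A ⊗[F] A) :
    pair2 f (0 : Module.Dual F A) t = 0 := pairM_zero_right f t

/-- Separation: if all dual pairings vanish (finite dimension), the tensor is zero. -/
lemma tensor_eq_zero_of_pairM [FiniteDimensional F M] [FiniteDimensional F N]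
    (t : M ⊗[F] N)
    (h : ∀ (f : Module.Dual F M) (g : Module.Dual F N), pairM f g t = 0) : t = 0 := by
  rw [← Module.forall_dual_apply_eq_zero_iff F t]
  intro φ
  obtain ⟨ψ, rfl⟩ := (TensorProduct.dualDistribEquiv F M N).surjective φ
  show (TensorProduct.dualDistrib F M N ψ) t = 0
  induction ψ using TensorProduct.induction_on with
  | zero => simp
  | tmul f g => rw [dualDistrib_tmul_eq_pairM]; exact h f g
  | add s u hs hu => rw [map_add, LinearMap.add_apply, hs, hu, add_zero]

end Aux

section Core

variable {F A : Type*} [Field F] [AddCommGroup A] [Module F A]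

/-- right contraction: `cR g (x ⊗ y) = g y • x` -/
noncomputable def cR (g : Module.Dual F A) : A ⊗[F] A →ₗ[F] A :=
  (TensorProduct.rid F A).toLinearMap ∘ₗ TensorProduct.map LinearMap.id g

/-- left contraction: `cL f (x ⊗ y) = f x • y` -/
noncomputable def cL (f : Module.Dual F A) : A ⊗[F] A →ₗ[F] A :=
  (TensorProduct.lid F A).toLinearMap ∘ₗ TensorProduct.map f LinearMap.id

lemma cR_tmul (g : Module.Dual F A) (x y : A) : cR g (x ⊗ₜ[F] y) = g y • x := by
  simp [cR]

lemma cL_tmul (f : Module.Dual F A) (x y : A) : cL f (x ⊗ₜ[F] y) = f x • y := by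
  simp [cL]

lemma apply_cR (u g : Module.Dual F A) (s : A ⊗[F] A) : u (cR g s) = pair2 u g s := by
  induction s using TensorProduct.induction_on with
  | zero => simp
  | tmul x y =>
      rw [cR_tmul, map_smul, pair2_eq_pairM, pairM_tmul, smul_eq_mul, mul_comm]
  | add s t hs ht => simp only [map_add, hs, ht]

lemma apply_cL (v f : Module.Dual F A) (s : A ⊗[F] A) : v (cL f s) = pair2 f v s := by
  induction s using TensorProduct.induction_on with
  | zero => simp
  | tmul x y =>
      rw [cL_tmul, map_smul, pair2_eq_pairM, pairM_tmul, smul_eq_mul]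
  | add s t hs ht => simp only [map_add, hs, ht]

variable (mA : A →ₗ[F] A →ₗ[F] A) (Ld : A →ₗ[F] Module.Dual F A →ₗ[F] Module.Dual F A)
  (hLd : ∀ (x y : A) (a : Module.Dual F A), Ld x a y = a (mA x y))

include hLd

lemma T1 (f g h : Module.Dual F A) (s t : A ⊗[F] A) :
    pairM f (pair2 g h) (t12 mA (s ⊗ₜ t)) = pair2 (Ld (cR g s) f) h t := by
  induction s using TensorProduct.induction_on with
  | zero => simp [pair2_zero_left]
  | tmul x y =>
      induction t using TensorProduct.induction_on with
      | zero => simp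
      | tmul x' y' =>
          simp only [t12, LinearMap.coe_comp, Function.comp_apply, LinearEquiv.coe_coe,
            TensorProduct.tensorTensorTensorComm_tmul, TensorProduct.map_tmul,
            TensorProduct.lift.tmul, LinearMap.id_coe, id_eq, pairM_tmul,
            pair2_eq_pairM, cR_tmul, map_smul, LinearMap.smul_apply, smul_eq_mul, hLd]
          ring
      | add t1 t2 h1 h2 =>
          simp only [TensorProduct.tmul_add, map_add, h1, h2]
  | add s1 s2 h1 h2 =>
      simp only [TensorProduct.add_tmul, map_add, LinearMap.add_apply,
        h1, h2, pair2_add_left]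

lemma T2 (f g h : Module.Dual F A) (s t : A ⊗[F] A) :
    pairM f (pair2 g h) (t13 mA (s ⊗ₜ t)) = pair2 g (Ld (cL f s) h) t := by
  induction s using TensorProduct.induction_on with
  | zero => simp [pair2_zero_right]
  | tmul x y =>
      induction t using TensorProduct.induction_on with
      | zero => simp
      | tmul x' y' =>
          simp only [t13, LinearMap.coe_comp, Function.comp_apply, LinearEquiv.coe_coe,
            TensorProduct.tensorTensorTensorComm_tmul, TensorProduct.map_tmul,
            TensorProduct.assoc_tmul, TensorProduct.lift.tmul, LinearMap.id_coe, id_eq,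
            pairM_tmul, pair2_eq_pairM, cL_tmul, map_smul, LinearMap.smul_apply,
            smul_eq_mul, hLd]
          ring
      | add t1 t2 h1 h2 =>
          simp only [TensorProduct.tmul_add, map_add, h1, h2]
  | add s1 s2 h1 h2 =>
      simp only [TensorProduct.add_tmul, map_add, LinearMap.add_apply,
        h1, h2, pair2_add_right]

lemma T3 (f g h : Module.Dual F A) (s t : A ⊗[F] A) :
    pairM f (pair2 g h) (t23 mA (s ⊗ₜ t)) = pair2 f (Ld (cR h s) g) t := by
  induction s using TensorProduct.induction_on with
  | zero => simp [pair2_zero_right]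
  | tmul x y =>
      induction t using TensorProduct.induction_on with
      | zero => simp
      | tmul x' y' =>
          simp only [t23, LinearMap.coe_comp, Function.comp_apply, LinearEquiv.coe_coe,
            TensorProduct.tensorTensorTensorComm_tmul, TensorProduct.map_tmul,
            TensorProduct.leftComm_tmul, TensorProduct.comm_tmul, TensorProduct.lift.tmul,
            LinearMap.id_coe, id_eq, pairM_tmul, pair2_eq_pairM, cR_tmul, map_smul,
            LinearMap.smul_apply, smul_eq_mul, hLd]
          ring
      | add t1 t2 h1 h2 =>
          simp only [TensorProduct.tmul_add, map_add, h1, h2]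
  | add s1 s2 h1 h2 =>
      simp only [TensorProduct.add_tmul, map_add, LinearMap.add_apply,
        h1, h2, pair2_add_right]

end Core

/-- an antisymmetric `r` solves the associative Yang–Baxter
equation iff `r(a*)·r(b*) = r(R·*(r(a*))b* + L·*(r(b*))a*)` for all `a*, b*`. -/
theorem ayb_iff_operator_form
    {F A : Type*} [Field F] [AddCommGroup A] [Module F A] [FiniteDimensional F A]
    (mA : A →ₗ[F] A →ₗ[F] A) (hA : IsAssocMul mA)
    (r : A ⊗[F] A)
    (hskew : (TensorProduct.comm F A A) r = -r)
    (rmap : Module.Dual F A →ₗ[F] A)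
    (hrmap : ∀ u v : Module.Dual F A, u (rmap v) = pair2 u v r)
    (Rd Ld : A →ₗ[F] Module.Dual F A →ₗ[F] Module.Dual F A)
    (hRd : ∀ (x y : A) (a : Module.Dual F A), Rd x a y = a (mA y x))
    (hLd : ∀ (x y : A) (a : Module.Dual F A), Ld x a y = a (mA x y)) :
    aybE mA r = 0 ↔
      (∀ a b : Module.Dual F A,
        mA (rmap a) (rmap b) = rmap (Rd (rmap a) b + Ld (rmap b) a)) := by
  have hanti : ∀ u v : Module.Dual F A, v (rmap u) = - u (rmap v) := by
    intro u v
    have hcomm : ∀ s : A ⊗[F] A, pair2 v u ((TensorProduct.comm F A A) s) = pair2 u v s := by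
      intro s
      induction s using TensorProduct.induction_on with
      | zero => simp
      | tmul x y =>
          rw [TensorProduct.comm_tmul, pair2_eq_pairM, pair2_eq_pairM, pairM_tmul,
            pairM_tmul, mul_comm]
      | add s t hs ht => simp only [map_add, hs, ht]
    have h2 := hcomm r
    rw [hskew, map_neg] at h2
    rw [hrmap v u, hrmap u v, ← h2, neg_neg]
  have hcr : ∀ g : Module.Dual F A, cR g r = rmap g := by
    intro g
    rw [← sub_eq_zero, ← Module.forall_dual_apply_eq_zero_iff F]
    intro u
    rw [map_sub, apply_cR, ← hrmap u g, sub_self]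
  have hcl : ∀ f : Module.Dual F A, cL f r = - rmap f := by
    intro f
    rw [← sub_eq_zero, ← Module.forall_dual_apply_eq_zero_iff F]
    intro v
    rw [map_sub, apply_cL, ← hrmap f v, map_neg, hanti v f, sub_self]
  have hS : ∀ f g h : Module.Dual F A,
      pairM f (pair2 g h) (aybE mA r) =
        f (mA (rmap g) (rmap h)) - f (rmap (Rd (rmap g) h)) - f (rmap (Ld (rmap h) g)) := by
    intro f g h
    have e1 := T1 mA Ld hLd f g h r r
    have e2 := T2 mA Ld hLd f g h r r
    have e3 := T3 mA Ld hLd f g h r r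
    rw [hcr] at e1
    rw [hcl] at e2
    rw [hcr] at e3
    have key : pairM f (pair2 g h) (aybE mA r) =
        pair2 (Ld (rmap g) f) h r + pair2 g (Ld (-rmap f) h) r - pair2 f (Ld (rmap h) g) r := by
      rw [aybE, map_sub, map_add, e1, e2, e3]
    rw [key, ← hrmap, ← hrmap, ← hrmap]
    have h1 : (Ld (rmap g) f) (rmap h) = f (mA (rmap g) (rmap h)) := hLd _ _ _
    have h2 : g (rmap (Ld (-rmap f) h)) = - f (rmap (Rd (rmap g) h)) := by
      have e : Ld (-rmap f) h = - (Ld (rmap f) h) := by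
        rw [map_neg, LinearMap.neg_apply]
      rw [e, map_neg, map_neg, neg_inj]
      calc g (rmap (Ld (rmap f) h))
          = - (Ld (rmap f) h) (rmap g) := hanti _ _
        _ = - h (mA (rmap f) (rmap g)) := by rw [hLd]
        _ = - (Rd (rmap g) h) (rmap f) := by rw [hRd]
        _ = f (rmap (Rd (rmap g) h)) := by rw [hanti (Rd (rmap g) h) f]
    rw [h1, h2]
    ring
  constructor
  · intro hy a b
    rw [← sub_eq_zero, ← Module.forall_dual_apply_eq_zero_iff F]
    intro c
    have h0 := hS c a b
    rw [hy] at h0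
    simp only [map_zero] at h0
    simp only [map_sub, map_add]
    linear_combination -h0
  · intro hop
    apply tensor_eq_zero_of_pairM
    intro f φ
    obtain ⟨ψ, rfl⟩ := (TensorProduct.dualDistribEquiv F A A).surjective φ
    show pairM f (TensorProduct.dualDistrib F A A ψ) (aybE mA r) = 0
    induction ψ using TensorProduct.induction_on with
    | zero => rw [map_zero]; exact pairM_zero_right _ _
    | tmul g h =>
        rw [dualDistrib_tmul_eq_pairM, ← pair2_eq_pairM, hS]
        have hgh := hop g h
        rw [map_add] at hgh
        rw [hgh]
        simp only [map_add]
        ring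
    | add s u hs hu =>
        rw [map_add, pairM_add_right, hs, hu, add_zero]
end

section
/- Let (A,·) be a finite-dimensional (nonunital) associative algebra over a field F and let r ∈ A⊗A be an antisymmetric solution of the associative Yang–Baxter equation. Let ∘ be the induced product on A*: a*∘b* = R·*(r(a*))b* + L·*(r(b*))a*. Then r(a*∘b*) = r(a*)·r(b*) for all a*, b* ∈ A*, i.e. the induced linear map r : (A*,∘) → (A,·) is a homomorphism of associative algebras. -/
open TensorProduct LinearMap

/-! Pairing the associative Yang–Baxter expression with `u ⊗ a ⊗ b` turns its three terms into
`u (r(a) · r(b))`, `-u (r (R·*(r(a)) b))` and `u (r (L·*(r(b)) a))`; the middle one needs the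
antisymmetry of `r` to move `a` from the first to the second leg. As the pairing vanishes for
every `u`, this is `r(a) · r(b) = r(a ∘ b)`. -/

section Contraction

variable {F A : Type*} [Field F] [AddCommGroup A] [Module F A]

noncomputable def contractSnd : A ⊗[F] A →ₗ[F] Module.Dual F A →ₗ[F] A :=
  dualTensorHom F (Module.Dual F A) A ∘ₗ TensorProduct.map (Module.Dual.eval F A) id ∘ₗ
    (TensorProduct.comm F A A).toLinearMap

@[simp]
theorem contractSnd_tmul (x y : A) (v : Module.Dual F A) :
    contractSnd (x ⊗ₜ y) v = v y • x := by
  simp [contractSnd]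

theorem apply_contractSnd (r : A ⊗[F] A) (u v : Module.Dual F A) :
    u (contractSnd r v) = pair2 u v r := by
  induction r using TensorProduct.induction_on with
  | zero => simp
  | tmul x y => simp [pair2, mul_comm]
  | add r s hr hs => simp [hr, hs]

theorem eq_contractSnd_of_apply_eq_pair2 {r : A ⊗[F] A} {f : Module.Dual F A →ₗ[F] A}
    (hf : ∀ u v : Module.Dual F A, u (f v) = pair2 u v r) : f = contractSnd r :=
  LinearMap.ext fun v => Module.eval_apply_injective F <| LinearMap.ext fun u => by
    simp [hf, apply_contractSnd]

noncomputable def pair3 (u a b : Module.Dual F A) : A ⊗[F] (A ⊗[F] A) →ₗ[F] F :=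
  (TensorProduct.lid F F).toLinearMap ∘ₗ TensorProduct.map u (pair2 a b)

@[simp]
theorem pair3_tmul (u a b : Module.Dual F A) (x y z : A) :
    pair3 u a b (x ⊗ₜ (y ⊗ₜ z)) = u x * (a y * b z) := by
  simp [pair3, pair2]

section Pairing

variable (m : A →ₗ[F] A →ₗ[F] A) (u a b : Module.Dual F A)

theorem pair3_t12 (r s : A ⊗[F] A) :
    pair3 u a b (t12 m (r ⊗ₜ s)) = u (m (contractSnd r a) (contractSnd s b)) := by
  induction r using TensorProduct.induction_on with
  | zero => simp
  | add r r' hr hr' => simp [add_tmul, hr, hr']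
  | tmul x y =>
    induction s using TensorProduct.induction_on with
    | zero => simp
    | add s s' hs hs' => simp [tmul_add, hs, hs']
    | tmul x' y' => simp [t12]; ring

theorem pair3_t13 (r s : A ⊗[F] A) :
    pair3 u a b (t13 m (r ⊗ₜ s)) =
      u (contractSnd r (b ∘ₗ m.flip (contractSnd (TensorProduct.comm F A A s) a))) := by
  induction r using TensorProduct.induction_on with
  | zero => simp
  | add r r' hr hr' => simp [add_tmul, hr, hr']
  | tmul x y =>
    induction s using TensorProduct.induction_on with
    | zero => simp
    | add s s' hs hs' => simp [tmul_add, hs, hs', add_mul]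
    | tmul x' y' => simp [t13]; ring

theorem pair3_t23 (r s : A ⊗[F] A) :
    pair3 u a b (t23 m (r ⊗ₜ s)) = u (contractSnd s (a ∘ₗ m (contractSnd r b))) := by
  induction r using TensorProduct.induction_on with
  | zero => simp
  | add r r' hr hr' => simp [add_tmul, hr, hr', LinearMap.comp_add]
  | tmul x y =>
    induction s using TensorProduct.induction_on with
    | zero => simp
    | add s s' hs hs' => simp [tmul_add, hs, hs']
    | tmul x' y' => simp [t23]; ring

end Pairing

theorem contractSnd_mul_of_aybE {m : A →ₗ[F] A →ₗ[F] A} {r : A ⊗[F] A}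
    (hskew : TensorProduct.comm F A A r = -r) (hayb : aybE m r = 0) (a b : Module.Dual F A) :
    m (contractSnd r a) (contractSnd r b) =
      contractSnd r (b ∘ₗ m.flip (contractSnd r a) + a ∘ₗ m (contractSnd r b)) := by
  refine Module.eval_apply_injective F (LinearMap.ext fun u => ?_)
  have h := congrArg (pair3 u a b) hayb
  simp only [aybE, map_add, map_sub, map_zero, pair3_t12, pair3_t13, pair3_t23, hskew,
    map_neg, LinearMap.neg_apply, LinearMap.comp_neg] at h
  simp only [map_add, LinearMap.add_apply, Module.Dual.eval_apply]
  linear_combination h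

end Contraction

theorem rmap_is_algebra_homomorphism_general
    {F A : Type*} [Field F] [AddCommGroup A] [Module F A]
    (mA : A →ₗ[F] A →ₗ[F] A)
    (r : A ⊗[F] A)
    (hskew : (TensorProduct.comm F A A) r = -r)
    (hayb : aybE mA r = 0)
    (rmap : Module.Dual F A →ₗ[F] A)
    (hrmap : ∀ u v : Module.Dual F A, u (rmap v) = pair2 u v r)
    (Rd Ld : A →ₗ[F] Module.Dual F A →ₗ[F] Module.Dual F A)
    (hRd : ∀ (x y : A) (a : Module.Dual F A), Rd x a y = a (mA y x))
    (hLd : ∀ (x y : A) (a : Module.Dual F A), Ld x a y = a (mA x y))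
    -- the induced product on `A*`
    (circ : Module.Dual F A → Module.Dual F A → Module.Dual F A)
    (hcirc : ∀ a b : Module.Dual F A, circ a b = Rd (rmap a) b + Ld (rmap b) a) :
    ∀ a b : Module.Dual F A, rmap (circ a b) = mA (rmap a) (rmap b) := by
  intro a b
  obtain rfl : rmap = contractSnd r := eq_contractSnd_of_apply_eq_pair2 hrmap
  have hR : ∀ x b, Rd x b = b ∘ₗ mA.flip x := fun x b => LinearMap.ext fun y => hRd x y b
  have hL : ∀ x a, Ld x a = a ∘ₗ mA x := fun x a => LinearMap.ext fun y => hLd x y a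
  rw [hcirc, hR, hL, contractSnd_mul_of_aybE hskew hayb]

/-- for an antisymmetric solution `r` of the associative
Yang–Baxter equation, the induced map `r : (A*, ∘) → (A, ·)` is a homomorphism
of associative algebras. -/
theorem rmap_is_algebra_homomorphism
    {F A : Type*} [Field F] [AddCommGroup A] [Module F A] [FiniteDimensional F A]
    (mA : A →ₗ[F] A →ₗ[F] A) (hA : IsAssocMul mA)
    (r : A ⊗[F] A)
    (hskew : (TensorProduct.comm F A A) r = -r)
    (hayb : aybE mA r = 0)
    (rmap : Module.Dual F A →ₗ[F] A)
    (hrmap : ∀ u v : Module.Dual F A, u (rmap v) = pair2 u v r)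
    (Rd Ld : A →ₗ[F] Module.Dual F A →ₗ[F] Module.Dual F A)
    (hRd : ∀ (x y : A) (a : Module.Dual F A), Rd x a y = a (mA y x))
    (hLd : ∀ (x y : A) (a : Module.Dual F A), Ld x a y = a (mA x y))
    -- the induced product on `A*`
    (circ : Module.Dual F A → Module.Dual F A → Module.Dual F A)
    (hcirc : ∀ a b : Module.Dual F A, circ a b = Rd (rmap a) b + Ld (rmap b) a) :
    ∀ a b : Module.Dual F A, rmap (circ a b) = mA (rmap a) (rmap b) :=
  rmap_is_algebra_homomorphism_general mA r hskew hayb rmap hrmap Rd Ld hRd hLd circ hcirc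
end

section
/- Let (A,·) be a (nonunital) associative algebra over a field F, (l,r,V) a bimodule of A, and T : V → A an O-operator associated to (l,r,V). Define products on V by u ≻ v = l(T(u))v and u ≺ v = r(T(v))u. Then (V, ≻, ≺) is a dendriform algebra, and T is a homomorphism from the associated associative algebra (V,*), u*v = u≻v + u≺v, to (A,·): T(u)·T(v) = T(u*v) for all u,v ∈ V. -/
open TensorProduct LinearMap

/-- an `𝒪`-operator `T` associated to a bimodule `(l, r, V)`
induces a dendriform algebra structure `u ≻ v = l(T u) v`, `u ≺ v = r(T v) u`
on `V`, and `T` is a homomorphism from the associated associative algebra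
on `V` to `A`. -/
theorem O_operator_gives_dendriform
    {F A V : Type*} [Field F] [AddCommGroup A] [Module F A]
    [AddCommGroup V] [Module F V]
    (mA : A →ₗ[F] A →ₗ[F] A) (hA : IsAssocMul mA)
    (lmod rmod : A →ₗ[F] V →ₗ[F] V) (hbim : IsBimodule mA lmod rmod)
    (T : V →ₗ[F] A)
    (hT : ∀ u v : V, mA (T u) (T v) = T (lmod (T u) v + rmod (T v) u))
    -- the induced products `u ≻ v = l(T u) v` and `u ≺ v = r(T v) u`
    (s p : V →ₗ[F] V →ₗ[F] V)
    (hs : ∀ u v : V, s u v = lmod (T u) v)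
    (hp : ∀ u v : V, p u v = rmod (T v) u) :
    IsDendriform s p ∧
    (∀ u v : V, T (s u v + p u v) = mA (T u) (T v)) := by
  obtain ⟨hl, hr, hc⟩ := hbim
  have hhom : ∀ u v : V, T (s u v + p u v) = mA (T u) (T v) := by
    intro u v; rw [hs, hp, hT]
  refine ⟨⟨?_, ?_, ?_⟩, hhom⟩
  · intro x y z
    rw [hp, hp, hp, hhom, hr]
  · intro x y z
    rw [hp, hs, hs, hp, hc]
  · intro x y z
    rw [hs, hs, hs, hhom, hl]
end

section
/- Let (A,*) be a (nonunital) associative algebra over a field F and ω a nondegenerate Connes cocycle on A. Suppose ≻, ≺ : A × A → A are bilinear products satisfying ω(x≻y, z) = ω(y, z*x) and ω(x≺y, z) = ω(x, y*z) for all x,y,z ∈ A. Then (A, ≻, ≺) is a dendriform algebra and it is compatible with *, i.e. x≻y + x≺y = x*y for all x,y ∈ A. -/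
open TensorProduct LinearMap

/-- a nondegenerate Connes cocycle `ω` on an associative algebra
`(A, *)` induces a compatible dendriform algebra structure determined by
`ω(x ≻ y, z) = ω(y, z*x)` and `ω(x ≺ y, z) = ω(x, y*z)`. -/
theorem connes_cocycle_gives_dendriform
    {F A : Type*} [Field F] [AddCommGroup A] [Module F A]
    (mA : A →ₗ[F] A →ₗ[F] A) (hA : IsAssocMul mA)
    (ω : A →ₗ[F] A →ₗ[F] F)
    (hanti : ∀ x y : A, ω x y = - ω y x)
    (hcocycle : ∀ x y z : A, ω (mA x y) z + ω (mA y z) x + ω (mA z x) y = 0)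
    (hnondeg : ∀ x : A, (∀ y : A, ω x y = 0) → x = 0)
    (s p : A →ₗ[F] A →ₗ[F] A)
    (hs : ∀ x y z : A, ω (s x y) z = ω y (mA z x))
    (hp : ∀ x y z : A, ω (p x y) z = ω x (mA y z)) :
    IsDendriform s p ∧ (∀ x y : A, s x y + p x y = mA x y) := by
  have compat : ∀ x y : A, s x y + p x y = mA x y := by
    intro x y
    have h : s x y + p x y - mA x y = 0 := by
      apply hnondeg
      intro z
      have h1 := hcocycle x y z
      have h2 := hanti (mA y z) x
      have h3 := hanti (mA z x) y
      have hs' := hs x y z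
      have hp' := hp x y z
      simp only [map_sub, map_add, LinearMap.sub_apply, LinearMap.add_apply]
      linear_combination hs' + hp' - h1 + h2 + h3
    exact sub_eq_zero.1 h
  refine ⟨⟨?_, ?_, ?_⟩, compat⟩
  · intro x y z
    apply sub_eq_zero.1
    apply hnondeg
    intro w
    rw [compat y z]
    simp only [map_sub, LinearMap.sub_apply]
    rw [hp, hp, hp, hA, sub_self]
  · intro x y z
    apply sub_eq_zero.1
    apply hnondeg
    intro w
    simp only [map_sub, LinearMap.sub_apply]
    rw [hp, hs, hs, hp, hA, sub_self]
  · intro x y z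
    apply sub_eq_zero.1
    apply hnondeg
    intro w
    rw [compat x y]
    simp only [map_sub, LinearMap.sub_apply]
    rw [hs, hs, hs, hA, sub_self]
end

section
/- Let (A,≻,≺) be a finite-dimensional dendriform algebra over a field F with associated associative product x*y = x≻y + x≺y, and let r ∈ A⊗A be symmetric (σ(r) = r) and nondegenerate, i.e. the induced linear map r : A* → A, ⟨u*, r(v*)⟩ = ⟨u*⊗v*, r⟩, is bijective. Then r satisfies the D-equation r₁₂*r₁₃ = r₁₃≺r₂₃ + r₂₃≻r₁₂ if and only if the bilinear form B on A defined by B(x,y) = ⟨r⁻¹(x), y⟩ is a 2-cocycle on the dendriform algebra, i.e. B(x*y, z) = B(y, z≺x) + B(x, y≻z) for all x,y,z ∈ A. -/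
open TensorProduct LinearMap

namespace DIffAux

variable {F A : Type*} [Field F] [AddCommGroup A] [Module F A]

/-- contraction: `x ⊗ y ↦ (v ↦ v y • x)`. -/
noncomputable def contr : A ⊗[F] A →ₗ[F] Module.Dual F A →ₗ[F] A :=
  TensorProduct.lift <| LinearMap.mk₂ F
    (fun x y => (Module.Dual.eval F A y).smulRight x)
    (fun x x' y => by ext v; simp [smul_add])
    (fun c x y => by
      ext v
      simp only [LinearMap.smulRight_apply, LinearMap.smul_apply]
      rw [smul_comm])
    (fun x y y' => by ext v; simp [add_smul])
    (fun c x y => by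
      ext v
      simp only [LinearMap.smulRight_apply, LinearMap.smul_apply,
        Module.Dual.eval_apply, map_smul, smul_eq_mul, mul_smul])

@[simp] lemma contr_tmul (x y : A) (v : Module.Dual F A) :
    contr (x ⊗ₜ[F] y) v = v y • x := by
  simp [contr]

noncomputable def pair3 (u v w : Module.Dual F A) : A ⊗[F] (A ⊗[F] A) →ₗ[F] F :=
  (TensorProduct.lid F F).toLinearMap ∘ₗ TensorProduct.map u (pair2 v w)

@[simp] lemma pair2_tmul (u v : Module.Dual F A) (x y : A) :
    pair2 u v (x ⊗ₜ[F] y) = u x * v y := by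
  simp [pair2, smul_eq_mul]

@[simp] lemma pair3_tmul (u v w : Module.Dual F A) (x y z : A) :
    pair3 u v w (x ⊗ₜ[F] (y ⊗ₜ[F] z)) = u x * (v y * w z) := by
  simp [pair3, smul_eq_mul]

/-- flipped contraction at `u`. -/
noncomputable def contrAt' (u : Module.Dual F A) : A ⊗[F] A →ₗ[F] A :=
  (contr (F := F) (A := A)).flip u ∘ₗ (TensorProduct.comm F A A).toLinearMap

@[simp] lemma contrAt'_tmul (u : Module.Dual F A) (x y : A) :
    contrAt' u (x ⊗ₜ[F] y) = u x • y := by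
  simp [contrAt']

lemma pair3_t12 (m : A →ₗ[F] A →ₗ[F] A) (u v w : Module.Dual F A) :
    pair3 u v w ∘ₗ t12 m =
      u ∘ₗ TensorProduct.lift m ∘ₗ
        TensorProduct.map ((contr (F := F) (A := A)).flip v)
          ((contr (F := F) (A := A)).flip w) := by
  apply TensorProduct.ext_fourfold'
  intro x y x' y'
  simp [t12, smul_eq_mul]
  ring

lemma pair3_t13 (m : A →ₗ[F] A →ₗ[F] A) (u v w : Module.Dual F A) :
    pair3 u v w ∘ₗ t13 m =
      w ∘ₗ TensorProduct.lift m ∘ₗ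
        TensorProduct.map (contrAt' u) (contrAt' v) := by
  apply TensorProduct.ext_fourfold'
  intro x y x' y'
  simp [t13, smul_eq_mul]
  ring

lemma pair3_t23 (m : A →ₗ[F] A →ₗ[F] A) (u v w : Module.Dual F A) :
    pair3 u v w ∘ₗ t23 m =
      v ∘ₗ TensorProduct.lift m ∘ₗ
        TensorProduct.map ((contr (F := F) (A := A)).flip w) (contrAt' u) := by
  apply TensorProduct.ext_fourfold'
  intro x y x' y'
  simp only [coe_comp, Function.comp_apply, t23, LinearEquiv.coe_coe,
    TensorProduct.map_tmul, TensorProduct.comm_tmul, id_coe, id_eq,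
    TensorProduct.tensorTensorTensorComm_tmul, TensorProduct.lift.tmul,
    TensorProduct.leftComm_tmul, pair3_tmul, contrAt'_tmul, flip_apply,
    contr_tmul, map_smul, LinearMap.smul_apply, smul_eq_mul]
  ring

lemma pair2_comm (r : A ⊗[F] A) (u v : Module.Dual F A) :
    pair2 u v ((TensorProduct.comm F A A) r) = pair2 v u r := by
  induction r using TensorProduct.induction_on with
  | zero => simp
  | tmul x y => simp [TensorProduct.comm_tmul, mul_comm]
  | add a b ha hb => simp only [map_add, ha, hb]

lemma pair2_eq_contr (r : A ⊗[F] A) (u v : Module.Dual F A) :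
    pair2 u v r = u (contr r v) := by
  induction r using TensorProduct.induction_on with
  | zero => simp
  | tmul x y => simp [mul_comm]
  | add a b ha hb => simp [map_add, ha, hb]

lemma dualDistrib_surjective {M N : Type*} [AddCommGroup M] [AddCommGroup N]
    [Module F M] [Module F N] [FiniteDimensional F M] [FiniteDimensional F N] :
    Function.Surjective (TensorProduct.dualDistrib F M N) := by
  intro φ
  obtain ⟨θ, h⟩ := (TensorProduct.dualDistribEquiv F M N).surjective φ
  exact ⟨θ, by simpa [TensorProduct.dualDistribEquiv,
    TensorProduct.dualDistribEquivOfBasis] using h⟩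

lemma sep [FiniteDimensional F A] (t : A ⊗[F] (A ⊗[F] A))
    (h : ∀ u v w : Module.Dual F A, pair3 u v w t = 0) : t = 0 := by
  rw [← Module.forall_dual_apply_eq_zero_iff F]
  intro φ
  obtain ⟨θ, rfl⟩ := dualDistrib_surjective (F := F) φ
  induction θ using TensorProduct.induction_on with
  | zero => simp
  | add a b ha hb => simp only [map_add, LinearMap.add_apply, ha, hb, add_zero]
  | tmul u ψ =>
    obtain ⟨θ', rfl⟩ := dualDistrib_surjective (F := F) ψ
    induction θ' using TensorProduct.induction_on with
    | zero => simp
    | add a b ha hb =>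
      simp only [map_add, TensorProduct.tmul_add, LinearMap.add_apply] at *
      simp [ha, hb]
    | tmul v w =>
      have : TensorProduct.dualDistrib F A (A ⊗[F] A)
          (u ⊗ₜ TensorProduct.dualDistrib F A A (v ⊗ₜ w)) = pair3 u v w := by
        apply TensorProduct.ext'
        intro x q
        induction q using TensorProduct.induction_on with
        | zero => simp
        | tmul y z => simp [TensorProduct.dualDistrib_apply]
        | add a b ha hb => simp [TensorProduct.tmul_add, ha, hb, mul_add]
      rw [this, h]

end DIffAux

/-- a symmetric nondegenerate `r` satisfies the `D`-equation
`r₁₂*r₁₃ = r₁₃ ≺ r₂₃ + r₂₃ ≻ r₁₂` iff the bilinear form `B(x,y) = ⟨r⁻¹(x), y⟩`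
is a 2-cocycle on the dendriform algebra. -/
theorem D_equation_iff_two_cocycle
    {F A : Type*} [Field F] [AddCommGroup A] [Module F A] [FiniteDimensional F A]
    (s p : A →ₗ[F] A →ₗ[F] A) (hd : IsDendriform s p)
    (r : A ⊗[F] A)
    (hsymm : (TensorProduct.comm F A A) r = r)
    -- nondegeneracy: `r` induces a linear isomorphism `A* ≃ A`
    (e : Module.Dual F A ≃ₗ[F] A)
    (he : ∀ u v : Module.Dual F A, u (e v) = pair2 u v r) :
    (t12 (s + p) (r ⊗ₜ r) = t13 p (r ⊗ₜ r) + t23 s (r ⊗ₜ r)) ↔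
      (∀ x y z : A,
        e.symm ((s + p) x y) z = e.symm y (p z x) + e.symm x (s y z)) := by
  classical
  have hce : ∀ v, DIffAux.contr r v = e v := by
    intro v
    have h0 : ∀ u : Module.Dual F A, u (DIffAux.contr r v - e v) = 0 := by
      intro u
      rw [map_sub, ← DIffAux.pair2_eq_contr, he u v, sub_self]
    exact sub_eq_zero.mp ((Module.forall_dual_apply_eq_zero_iff F _).mp h0)
  have hce' : ∀ u, DIffAux.contrAt' u r = e u := by
    intro u
    have h1 : DIffAux.contrAt' u r
        = DIffAux.contr ((TensorProduct.comm F A A) r) u := by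
      simp [DIffAux.contrAt', LinearMap.flip_apply]
    rw [h1, hsymm, hce]
  have hsym' : ∀ u v : Module.Dual F A, u (e v) = v (e u) := by
    intro u v
    rw [he, he, ← DIffAux.pair2_comm r u v, hsymm]
  have hsa : ∀ a b : A, e.symm a b = e.symm b a := by
    intro a b
    calc e.symm a b = e.symm a (e (e.symm b)) := by rw [e.apply_symm_apply]
      _ = e.symm b (e (e.symm a)) := hsym' _ _
      _ = e.symm b a := by rw [e.apply_symm_apply]
  have h12 : ∀ u v w : Module.Dual F A,
      DIffAux.pair3 u v w (t12 (s + p) (r ⊗ₜ r)) = u ((s + p) (e v) (e w)) := by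
    intro u v w
    have h' := LinearMap.congr_fun (DIffAux.pair3_t12 (s + p) u v w) (r ⊗ₜ r)
    simpa only [coe_comp, Function.comp_apply, TensorProduct.map_tmul,
      TensorProduct.lift.tmul, flip_apply, hce] using h'
  have h13 : ∀ u v w : Module.Dual F A,
      DIffAux.pair3 u v w (t13 p (r ⊗ₜ r)) = w (p (e u) (e v)) := by
    intro u v w
    have h' := LinearMap.congr_fun (DIffAux.pair3_t13 p u v w) (r ⊗ₜ r)
    simpa only [coe_comp, Function.comp_apply, TensorProduct.map_tmul,
      TensorProduct.lift.tmul, hce'] using h'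
  have h23 : ∀ u v w : Module.Dual F A,
      DIffAux.pair3 u v w (t23 s (r ⊗ₜ r)) = v (s (e w) (e u)) := by
    intro u v w
    have h' := LinearMap.congr_fun (DIffAux.pair3_t23 s u v w) (r ⊗ₜ r)
    simpa only [coe_comp, Function.comp_apply, TensorProduct.map_tmul,
      TensorProduct.lift.tmul, flip_apply, hce, hce'] using h'
  constructor
  · intro h x y z
    have key : ∀ u v w : Module.Dual F A,
        u ((s + p) (e v) (e w)) = w (p (e u) (e v)) + v (s (e w) (e u)) := by
      intro u v w
      have h' := congrArg (DIffAux.pair3 u v w) h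
      rw [map_add, h12 u v w, h13 u v w, h23 u v w] at h'
      exact h'
    have hk := key (e.symm z) (e.symm x) (e.symm y)
    simp only [e.apply_symm_apply] at hk
    rw [hsa]
    exact hk
  · intro h
    rw [← sub_eq_zero]
    apply DIffAux.sep
    intro u v w
    rw [map_sub, map_add, h12 u v w, h13 u v w, h23 u v w, sub_eq_zero]
    have hk := h (e v) (e w) (e u)
    simp only [e.symm_apply_apply] at hk
    rw [hsa ((s + p) (e v) (e w)) (e u), e.symm_apply_apply] at hk
    exact hk
end
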